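/- arXiv:0804.1307 — 11 statements merged into one kernel-verified Lean document; each statement's English description precedes it below -/
import Mathlib

section
/- Any two non-degenerate triangles formed by points of a plane integral point set have the same characteristic, i.e., the squarefree parts of (a+b+c)(a+b-c)(a-b+c)(-a+b+c) agree for any two non-collinear triples of points of the set. -/
/-!
Heron's formula writes `(a+b+c)(a+b-c)(a-b+c)(-a+b+c)` for a triangle `p₁p₂p₃` as `4 G(u, v)`, where
`G(u, v) = ‖u‖²‖v‖² - ⟪u, v⟫²` is the Gram determinant of `u = p₂ - p₁` and `v = p₃ - p₁`.
In the plane `G(u, v) G(x, y) = (⟪u, x⟫⟪v, y⟫ - ⟪u, y⟫⟪v, x⟫)²`, both sides being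
`(ω u v · ω x y)²` for an area form `ω`. By polarization, twice any inner product `⟪x - y, z - t⟫`
of points of an integral point set is an integer. Hence `k w² · k' w'²` is a perfect square, so
`k k'` is one, and two squarefree numbers whose product is a square are equal.
-/

open Module RealInnerProductSpace EuclideanSpace

section

variable {E : Type*} [NormedAddCommGroup E] [InnerProductSpace ℝ E]

theorem two_mul_inner_sub_sub_eq_dist_sq (x y z t : E) :
    2 * ⟪x - y, z - t⟫ = dist x t ^ 2 + dist y z ^ 2 - dist x z ^ 2 - dist y t ^ 2 := by
  simp only [dist_eq_norm, @norm_sub_sq_real, inner_sub_left, inner_sub_right]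
  ring

theorem heron_product_eq_four_mul_gram (p₁ p₂ p₃ : E) :
    (dist p₁ p₂ + dist p₂ p₃ + dist p₁ p₃) * (dist p₁ p₂ + dist p₂ p₃ - dist p₁ p₃) *
        (dist p₁ p₂ - dist p₂ p₃ + dist p₁ p₃) * (-dist p₁ p₂ + dist p₂ p₃ + dist p₁ p₃) =
      4 * (‖p₂ - p₁‖ ^ 2 * ‖p₃ - p₁‖ ^ 2 - ⟪p₂ - p₁, p₃ - p₁⟫ ^ 2) := by
  have h := two_mul_inner_sub_sub_eq_dist_sq p₂ p₁ p₃ p₁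
  rw [← dist_eq_norm, ← dist_eq_norm, dist_comm p₂ p₁, dist_comm p₃ p₁]
  rw [dist_self, dist_comm p₂ p₁] at h
  linear_combination
    (2 * ⟪p₂ - p₁, p₃ - p₁⟫ + dist p₁ p₂ ^ 2 + dist p₁ p₃ ^ 2 - dist p₂ p₃ ^ 2) * h

theorem exists_int_two_mul_inner_sub_sub_eq {S : Set E}
    (hS : ∀ p ∈ S, ∀ q ∈ S, ∃ m : ℕ, dist p q = m)
    {x y z t : E} (hx : x ∈ S) (hy : y ∈ S) (hz : z ∈ S) (ht : t ∈ S) :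
    ∃ n : ℤ, 2 * ⟪x - y, z - t⟫ = n := by
  obtain ⟨d₁, h₁⟩ := hS x hx t ht
  obtain ⟨d₂, h₂⟩ := hS y hy z hz
  obtain ⟨d₃, h₃⟩ := hS x hx z hz
  obtain ⟨d₄, h₄⟩ := hS y hy t ht
  refine ⟨d₁ ^ 2 + d₂ ^ 2 - d₃ ^ 2 - d₄ ^ 2, ?_⟩
  rw [two_mul_inner_sub_sub_eq_dist_sq, h₁, h₂, h₃, h₄]
  push_cast
  ring

variable [Fact (finrank ℝ E = 2)]

theorem Orientation.areaForm_mul_areaForm (o : Orientation ℝ E (Fin 2)) (u v x y : E) :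
    o.areaForm u v * o.areaForm x y = ⟪u, x⟫ * ⟪v, y⟫ - ⟪u, y⟫ * ⟪v, x⟫ := by
  rcases eq_or_ne u 0 with rfl | hu
  · simp
  apply mul_left_cancel₀ (by positivity : ‖u‖ ^ 2 ≠ 0)
  linear_combination ⟪u, x⟫ * o.inner_mul_inner_add_areaForm_mul_areaForm u v y
    - ⟪u, y⟫ * o.inner_mul_inner_add_areaForm_mul_areaForm u v x
    - o.areaForm u v * o.inner_mul_areaForm_sub u x y

theorem gram_mul_gram_eq_sq (u v x y : E) :
    (‖u‖ ^ 2 * ‖v‖ ^ 2 - ⟪u, v⟫ ^ 2) * (‖x‖ ^ 2 * ‖y‖ ^ 2 - ⟪x, y⟫ ^ 2) =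
      (⟪u, x⟫ * ⟪v, y⟫ - ⟪u, y⟫ * ⟪v, x⟫) ^ 2 := by
  have : FiniteDimensional ℝ E := .of_fact_finrank_eq_two
  let o : Orientation ℝ E (Fin 2) := (finBasisOfFinrankEq ℝ E Fact.out).orientation
  rw [← o.areaForm_mul_areaForm, ← o.inner_sq_add_areaForm_sq u v,
    ← o.inner_sq_add_areaForm_sq x y]
  ring

end

theorem Nat.isSquare_of_mul_sq_eq_sq {n W m : ℕ} (hW : W ≠ 0) (h : n * W ^ 2 = m ^ 2) :
    IsSquare n := by
  obtain ⟨t, rfl⟩ : W ∣ m := (Nat.pow_dvd_pow_iff two_ne_zero).mp ⟨n, by rw [← h, mul_comm]⟩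
  refine ⟨t, Nat.eq_of_mul_eq_mul_right (pow_pos (Nat.pos_of_ne_zero hW) 2) ?_⟩
  rw [h]
  ring

theorem Squarefree.eq_of_isSquare_mul {k k' : ℕ} (hk : Squarefree k) (hk' : Squarefree k')
    (h : IsSquare (k * k')) : k = k' := by
  obtain ⟨t, ht⟩ := h
  obtain ⟨u, rfl⟩ : k ∣ t := (hk.dvd_pow_iff_dvd two_ne_zero).mp ⟨k', by rw [sq, ← ht]⟩
  have hk'u : k' = u * u * k :=
    Nat.eq_of_mul_eq_mul_left (Nat.pos_of_ne_zero hk.ne_zero) (by rw [ht]; ring)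
  rw [hk'u, Nat.isUnit_iff.mp (hk' u (hk'u ▸ dvd_mul_right _ _))]
  ring

theorem char_eq_of_integral_point_set_general (S : Set (EuclideanSpace ℝ (Fin 2)))
    (hint : ∀ p ∈ S, ∀ q ∈ S, ∃ m : ℕ, dist p q = m)
    (p1 p2 p3 q1 q2 q3 : EuclideanSpace ℝ (Fin 2))
    (hp1 : p1 ∈ S) (hp2 : p2 ∈ S) (hp3 : p3 ∈ S)
    (hq1 : q1 ∈ S) (hq2 : q2 ∈ S) (hq3 : q3 ∈ S)
    (a b c a' b' c' : ℕ)
    (hda : dist p1 p2 = a) (hdb : dist p2 p3 = b) (hdc : dist p1 p3 = c)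
    (hda' : dist q1 q2 = a') (hdb' : dist q2 q3 = b') (hdc' : dist q1 q3 = c')
    (k k' w w' : ℕ) (hk : Squarefree k) (hk' : Squarefree k') (hw : 0 < w) (hw' : 0 < w')
    (hQ : ((a : ℤ) + b + c) * ((a : ℤ) + b - c) * ((a : ℤ) - b + c) * (-(a : ℤ) + b + c)
        = (k : ℤ) * (w : ℤ) ^ 2)
    (hQ' : ((a' : ℤ) + b' + c') * ((a' : ℤ) + b' - c') * ((a' : ℤ) - b' + c') *
        (-(a' : ℤ) + b' + c') = (k' : ℤ) * (w' : ℤ) ^ 2) :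
    k = k' := by
  have hG : (k : ℝ) * w ^ 2 =
      4 * (‖p2 - p1‖ ^ 2 * ‖p3 - p1‖ ^ 2 - ⟪p2 - p1, p3 - p1⟫ ^ 2) := by
    rw [← heron_product_eq_four_mul_gram, hda, hdb, hdc]
    exact_mod_cast hQ.symm
  have hG' : (k' : ℝ) * w' ^ 2 =
      4 * (‖q2 - q1‖ ^ 2 * ‖q3 - q1‖ ^ 2 - ⟪q2 - q1, q3 - q1⟫ ^ 2) := by
    rw [← heron_product_eq_four_mul_gram, hda', hdb', hdc']
    exact_mod_cast hQ'.symm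
  obtain ⟨n₁, h₁⟩ := exists_int_two_mul_inner_sub_sub_eq hint hp2 hp1 hq2 hq1
  obtain ⟨n₂, h₂⟩ := exists_int_two_mul_inner_sub_sub_eq hint hp3 hp1 hq3 hq1
  obtain ⟨n₃, h₃⟩ := exists_int_two_mul_inner_sub_sub_eq hint hp2 hp1 hq3 hq1
  obtain ⟨n₄, h₄⟩ := exists_int_two_mul_inner_sub_sub_eq hint hp3 hp1 hq2 hq1
  have hsq : k * k' * (w * w') ^ 2 = (n₁ * n₂ - n₃ * n₄).natAbs ^ 2 := by
    have hR : ((k * k' * (w * w') ^ 2 : ℕ) : ℝ) = ((n₁ * n₂ - n₃ * n₄) ^ 2 : ℤ) := by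
      push_cast
      rw [← h₁, ← h₂, ← h₃, ← h₄]
      linear_combination k' * w' ^ 2 * hG
        + 4 * (‖p2 - p1‖ ^ 2 * ‖p3 - p1‖ ^ 2 - ⟪p2 - p1, p3 - p1⟫ ^ 2) * hG'
        + 16 * gram_mul_gram_eq_sq (p2 - p1) (p3 - p1) (q2 - q1) (q3 - q1)
    rw [← Int.natCast_inj]
    push_cast [sq_abs]
    exact_mod_cast hR
  exact hk.eq_of_isSquare_mul hk' (Nat.isSquare_of_mul_sq_eq_sq (by positivity) hsq)

/-- Any two non-degenerate triangles formed by points of a plane integral point set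
have the same characteristic: the squarefree parts of
`(a+b+c)(a+b-c)(a-b+c)(-a+b+c)` agree for any two non-collinear triples of points. -/
theorem char_eq_of_integral_point_set (S : Set (EuclideanSpace ℝ (Fin 2))) (hfin : S.Finite)
    (hint : ∀ p ∈ S, ∀ q ∈ S, ∃ m : ℕ, dist p q = m)
    (hncol : ¬ Collinear ℝ S)
    (p1 p2 p3 q1 q2 q3 : EuclideanSpace ℝ (Fin 2))
    (hp1 : p1 ∈ S) (hp2 : p2 ∈ S) (hp3 : p3 ∈ S)
    (hq1 : q1 ∈ S) (hq2 : q2 ∈ S) (hq3 : q3 ∈ S)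
    (hpnc : ¬ Collinear ℝ ({p1, p2, p3} : Set (EuclideanSpace ℝ (Fin 2))))
    (hqnc : ¬ Collinear ℝ ({q1, q2, q3} : Set (EuclideanSpace ℝ (Fin 2))))
    (a b c a' b' c' : ℕ)
    (hda : dist p1 p2 = a) (hdb : dist p2 p3 = b) (hdc : dist p1 p3 = c)
    (hda' : dist q1 q2 = a') (hdb' : dist q2 q3 = b') (hdc' : dist q1 q3 = c')
    (k k' w w' : ℕ) (hk : Squarefree k) (hk' : Squarefree k') (hw : 0 < w) (hw' : 0 < w')
    (hQ : ((a : ℤ) + b + c) * ((a : ℤ) + b - c) * ((a : ℤ) - b + c) * (-(a : ℤ) + b + c)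
        = (k : ℤ) * (w : ℤ) ^ 2)
    (hQ' : ((a' : ℤ) + b' + c') * ((a' : ℤ) + b' - c') * ((a' : ℤ) - b' + c') *
        (-(a' : ℤ) + b' + c') = (k' : ℤ) * (w' : ℤ) ^ 2) :
    k = k' :=
  char_eq_of_integral_point_set_general S hint p1 p2 p3 q1 q2 q3 hp1 hp2 hp3 hq1 hq2 hq3 a b c a' b'
    c' hda hdb hdc hda' hdb' hdc' k k' w w' hk hk' hw hw' hQ hQ'
end

section
/- The minimum possible diameter of a plane integral point set of 4 points is 4; that is, there exist 4 non-collinear points in ℝ² with pairwise integral distances and largest distance 4, and no such configuration exists with largest distance at most 3. -/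
/-!
The example consists of the collinear points `A = (0, 0)`, `B = (3, 0)`, `C = (4, 0)` and the apex
`D = (7/2, √15/2)` of the isosceles triangle over `BC` with legs `2`, which happens to satisfy
`AD = 4`.

For the bound, the vectors `pᵢ - p₀` of four points in the plane are linearly dependent, so
their Gram determinant vanishes; written in the six mutual distances this is a Cayley–Menger
relation. Among the `3⁶` assignments of distances in `{1, 2, 3}`, every solution of this relation
makes the triangles `p₀p₂p₃` and `p₁p₂p₃` degenerate, which puts all four points on the line
`p₂p₃`.
-/

open scoped RealInnerProductSpace

def IsDegenerateTriangle {α : Type*} [Add α] (x y z : α) : Prop :=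
  x + y = z ∨ y + z = x ∨ z + x = y

instance (x y z : ℕ) : Decidable (IsDegenerateTriangle x y z) := by
  unfold IsDegenerateTriangle; infer_instance

theorem isDegenerateTriangle_natCast {R : Type*} [AddMonoidWithOne R] [CharZero R] {x y z : ℕ} :
    IsDegenerateTriangle (x : R) y z ↔ IsDegenerateTriangle x y z := by
  simp only [IsDegenerateTriangle]
  norm_cast

theorem collinear_iff_isDegenerateTriangle {V P : Type*} [NormedAddCommGroup V] [NormedSpace ℝ V]
    [StrictConvexSpace ℝ V] [MetricSpace P] [NormedAddTorsor V P] {p q r : P} :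
    Collinear ℝ ({p, q, r} : Set P) ↔ IsDegenerateTriangle (dist p q) (dist q r) (dist r p) := by
  have hwbtw (x y z : P) : dist x y + dist y z = dist z x ↔ Wbtw ℝ x y z :=
    dist_comm z x ▸ dist_add_dist_eq_iff
  rw [IsDegenerateTriangle, hwbtw, hwbtw, hwbtw]
  refine ⟨Collinear.wbtw_or_wbtw_or_wbtw, ?_⟩
  rintro (h | h | h)
  · exact h.collinear
  · exact h.collinear.subset (by simp [Set.insert_subset_iff])
  · exact h.collinear.subset (by simp [Set.insert_subset_iff])

theorem Matrix.det_gram_eq_zero_of_finrank_lt {𝕜 E ι : Type*} [RCLike 𝕜] [NormedAddCommGroup E]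
    [InnerProductSpace 𝕜 E] [FiniteDimensional 𝕜 E] [Fintype ι] [DecidableEq ι] (v : ι → E)
    (h : Module.finrank 𝕜 E < Fintype.card ι) : (Matrix.gram 𝕜 v).det = 0 := by
  by_contra hdet
  exact h.not_ge (Matrix.linearIndependent_of_det_gram_ne_zero hdet).fintype_card_le_finrank

/-- Four times the Gram determinant of `p₁ - p₀, p₂ - p₀, p₃ - p₀` when `a, b, c` are the
distances from `p₀` to `p₁, p₂, p₃` and `d, e, f` are `p₁p₂, p₁p₃, p₂p₃`. -/
def cayleyMenger {R : Type*} [CommRing R] (a b c d e f : R) : R :=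
  4 * a ^ 2 * b ^ 2 * c ^ 2
    + (a ^ 2 + b ^ 2 - d ^ 2) * (a ^ 2 + c ^ 2 - e ^ 2) * (b ^ 2 + c ^ 2 - f ^ 2)
    - a ^ 2 * (b ^ 2 + c ^ 2 - f ^ 2) ^ 2
    - b ^ 2 * (a ^ 2 + c ^ 2 - e ^ 2) ^ 2
    - c ^ 2 * (a ^ 2 + b ^ 2 - d ^ 2) ^ 2

theorem isDegenerateTriangle_of_cayleyMenger_eq_zero :
    ∀ a ∈ Finset.Icc (1 : ℕ) 3, ∀ b ∈ Finset.Icc (1 : ℕ) 3, ∀ c ∈ Finset.Icc (1 : ℕ) 3,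
    ∀ d ∈ Finset.Icc (1 : ℕ) 3, ∀ e ∈ Finset.Icc (1 : ℕ) 3, ∀ f ∈ Finset.Icc (1 : ℕ) 3,
    cayleyMenger (a : ℤ) b c d e f = 0 →
      IsDegenerateTriangle b f c ∧ IsDegenerateTriangle d f e := by
  decide

section
variable {V P : Type*} [NormedAddCommGroup V] [InnerProductSpace ℝ V] [MetricSpace P]
  [NormedAddTorsor V P]

theorem real_inner_vsub_vsub_eq_dist (p₀ p q : P) :
    ⟪p -ᵥ p₀, q -ᵥ p₀⟫ = (dist p₀ p ^ 2 + dist p₀ q ^ 2 - dist p q ^ 2) / 2 := by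
  rw [real_inner_eq_norm_mul_self_add_norm_mul_self_sub_norm_sub_mul_self_div_two,
    vsub_sub_vsub_cancel_right, dist_comm p₀ p, dist_comm p₀ q, dist_eq_norm_vsub V,
    dist_eq_norm_vsub V, dist_eq_norm_vsub V]
  ring

theorem cayleyMenger_dist_eq_zero [FiniteDimensional ℝ V] (hV : Module.finrank ℝ V < 3)
    (p₀ p₁ p₂ p₃ : P) :
    cayleyMenger (dist p₀ p₁) (dist p₀ p₂) (dist p₀ p₃) (dist p₁ p₂) (dist p₁ p₃)
      (dist p₂ p₃) = 0 := by
  have hdet := Matrix.det_gram_eq_zero_of_finrank_lt (𝕜 := ℝ) ![p₁ -ᵥ p₀, p₂ -ᵥ p₀, p₃ -ᵥ p₀]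
    (by simpa using hV)
  simp only [Matrix.det_fin_three, Matrix.gram_apply, Matrix.cons_val_zero, Matrix.cons_val_one,
    Matrix.cons_val_two, Matrix.head_cons, Matrix.tail_cons, real_inner_vsub_vsub_eq_dist,
    dist_self, dist_comm p₂ p₁, dist_comm p₃ p₁, dist_comm p₃ p₂] at hdet
  unfold cayleyMenger
  linear_combination 4 * hdet

theorem collinear_of_card_eq_four_of_dist_le_three [FiniteDimensional ℝ V]
    (hV : Module.finrank ℝ V < 3) {S : Finset P} (hS : S.card = 4)
    (h : ∀ p ∈ S, ∀ q ∈ S, ∃ m : ℕ, m ≤ 3 ∧ dist p q = m) : Collinear ℝ (S : Set P) := by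
  classical
  obtain ⟨p₀, p₁, p₂, p₃, h01, h02, h03, h12, h13, h23, rfl⟩ := Finset.card_eq_four.1 hS
  have hdist {p q : P} (hp : p ∈ ({p₀, p₁, p₂, p₃} : Finset P))
      (hq : q ∈ ({p₀, p₁, p₂, p₃} : Finset P)) (hpq : p ≠ q) :
      ∃ m ∈ Finset.Icc (1 : ℕ) 3, dist p q = m := by
    obtain ⟨m, hm3, hm⟩ := h p hp q hq
    refine ⟨m, Finset.mem_Icc.2 ⟨?_, hm3⟩, hm⟩
    exact_mod_cast hm ▸ dist_pos.2 hpq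
  obtain ⟨a, ha, hpa⟩ := hdist (by simp) (by simp) h01
  obtain ⟨b, hb, hpb⟩ := hdist (by simp) (by simp) h02
  obtain ⟨c, hc, hpc⟩ := hdist (by simp) (by simp) h03
  obtain ⟨d, hd, hpd⟩ := hdist (by simp) (by simp) h12
  obtain ⟨e, he, hpe⟩ := hdist (by simp) (by simp) h13
  obtain ⟨f, hf, hpf⟩ := hdist (by simp) (by simp) h23
  have hcm : cayleyMenger (a : ℤ) b c d e f = 0 := by
    have hreal := cayleyMenger_dist_eq_zero hV p₀ p₁ p₂ p₃
    rw [hpa, hpb, hpc, hpd, hpe, hpf] at hreal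
    unfold cayleyMenger at hreal ⊢
    exact_mod_cast hreal
  obtain ⟨hbfc, hdfe⟩ :=
    isDegenerateTriangle_of_cayleyMenger_eq_zero a ha b hb c hc d hd e he f hf hcm
  have h023 : Collinear ℝ ({p₀, p₂, p₃} : Set P) := by
    rw [collinear_iff_isDegenerateTriangle, hpb, hpf, dist_comm, hpc]
    exact isDegenerateTriangle_natCast.2 hbfc
  have h123 : Collinear ℝ ({p₁, p₂, p₃} : Set P) := by
    rw [collinear_iff_isDegenerateTriangle, hpd, hpf, dist_comm, hpe]
    exact isDegenerateTriangle_natCast.2 hdfe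
  push_cast
  exact collinear_insert_insert_of_mem_affineSpan_pair
    (h023.mem_affineSpan_of_mem_of_ne (by simp) (by simp) (by simp) h23)
    (h123.mem_affineSpan_of_mem_of_ne (by simp) (by simp) (by simp) h23)

end

theorem forall_mem_insert_four_dist {P : Type*} [PseudoMetricSpace P] [DecidableEq P]
    {p₀ p₁ p₂ p₃ : P} {Q : ℝ → Prop} (h0 : Q 0) (h01 : Q (dist p₀ p₁)) (h02 : Q (dist p₀ p₂))
    (h03 : Q (dist p₀ p₃)) (h12 : Q (dist p₁ p₂)) (h13 : Q (dist p₁ p₃)) (h23 : Q (dist p₂ p₃)) :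
    ∀ p ∈ ({p₀, p₁, p₂, p₃} : Finset P), ∀ q ∈ ({p₀, p₁, p₂, p₃} : Finset P), Q (dist p q) := by
  intro p hp q hq
  simp only [Finset.mem_insert, Finset.mem_singleton] at hp hq
  rcases hp with rfl | rfl | rfl | rfl <;> rcases hq with rfl | rfl | rfl | rfl <;>
    first | rwa [dist_self] | assumption | rwa [dist_comm]

theorem EuclideanSpace.dist_eq_of_sq_add_sq {x₁ y₁ x₂ y₂ m : ℝ} (hm : 0 ≤ m)
    (h : (x₁ - x₂) ^ 2 + (y₁ - y₂) ^ 2 = m ^ 2) : dist !₂[x₁, y₁] !₂[x₂, y₂] = m := by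
  rw [EuclideanSpace.dist_eq, Fin.sum_univ_two]
  simp [Real.dist_eq, sq_abs, h, hm]

namespace DiameterFour

noncomputable def A : EuclideanSpace ℝ (Fin 2) := !₂[0, 0]
noncomputable def B : EuclideanSpace ℝ (Fin 2) := !₂[3, 0]
noncomputable def C : EuclideanSpace ℝ (Fin 2) := !₂[4, 0]
noncomputable def D : EuclideanSpace ℝ (Fin 2) := !₂[7 / 2, √15 / 2]

theorem dist_A_B : dist A B = 3 := EuclideanSpace.dist_eq_of_sq_add_sq (by norm_num) (by norm_num)
theorem dist_A_C : dist A C = 4 := EuclideanSpace.dist_eq_of_sq_add_sq (by norm_num) (by norm_num)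
theorem dist_B_C : dist B C = 1 := EuclideanSpace.dist_eq_of_sq_add_sq (by norm_num) (by norm_num)
theorem dist_A_D : dist A D = 4 :=
  EuclideanSpace.dist_eq_of_sq_add_sq (by norm_num) (by ring_nf; norm_num)
theorem dist_B_D : dist B D = 2 :=
  EuclideanSpace.dist_eq_of_sq_add_sq (by norm_num) (by ring_nf; norm_num)
theorem dist_C_D : dist C D = 2 :=
  EuclideanSpace.dist_eq_of_sq_add_sq (by norm_num) (by ring_nf; norm_num)

theorem card_eq : ({A, B, C, D} : Finset (EuclideanSpace ℝ (Fin 2))).card = 4 := by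
  refine Finset.card_eq_four.2 ⟨A, B, C, D, ?_, ?_, ?_, ?_, ?_, ?_, rfl⟩ <;>
    refine dist_pos.1 ?_ <;>
    simp only [dist_A_B, dist_A_C, dist_A_D, dist_B_C, dist_B_D, dist_C_D] <;> norm_num

theorem dist_le_four : ∀ p ∈ ({A, B, C, D} : Finset (EuclideanSpace ℝ (Fin 2))),
    ∀ q ∈ ({A, B, C, D} : Finset (EuclideanSpace ℝ (Fin 2))), ∃ m : ℕ, m ≤ 4 ∧ dist p q = m :=
  forall_mem_insert_four_dist (Q := fun d => ∃ m : ℕ, m ≤ 4 ∧ d = m) ⟨0, by simp⟩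
    ⟨3, by norm_num, by simp [dist_A_B]⟩ ⟨4, by norm_num, by simp [dist_A_C]⟩
    ⟨4, by norm_num, by simp [dist_A_D]⟩ ⟨1, by norm_num, by simp [dist_B_C]⟩
    ⟨2, by norm_num, by simp [dist_B_D]⟩ ⟨2, by norm_num, by simp [dist_C_D]⟩

theorem not_collinear : ¬ Collinear ℝ ({A, B, C, D} : Set (EuclideanSpace ℝ (Fin 2))) := by
  intro h
  have hABD : Collinear ℝ ({A, B, D} : Set (EuclideanSpace ℝ (Fin 2))) :=
    h.subset (by simp [Set.insert_subset_iff])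
  rw [collinear_iff_isDegenerateTriangle, dist_B_D, dist_comm D A, dist_A_D, dist_A_B,
    IsDegenerateTriangle] at hABD
  norm_num at hABD

end DiameterFour

open DiameterFour in
/-- The minimum possible diameter of a 4-point plane integral point set is `4`:
there exist 4 non-collinear points with pairwise integral distances and largest
distance `4`, and no such configuration has all pairwise distances at most `3`. -/
theorem min_diameter_four_points :
    (∃ S : Finset (EuclideanSpace ℝ (Fin 2)), S.card = 4 ∧
      (∀ p ∈ S, ∀ q ∈ S, ∃ m : ℕ, dist p q = m) ∧
      ¬ Collinear ℝ (S : Set (EuclideanSpace ℝ (Fin 2))) ∧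
      (∀ p ∈ S, ∀ q ∈ S, dist p q ≤ 4) ∧
      (∃ p ∈ S, ∃ q ∈ S, dist p q = 4)) ∧
    ¬ (∃ S : Finset (EuclideanSpace ℝ (Fin 2)), S.card = 4 ∧
      (∀ p ∈ S, ∀ q ∈ S, ∃ m : ℕ, dist p q = m) ∧
      ¬ Collinear ℝ (S : Set (EuclideanSpace ℝ (Fin 2))) ∧
      (∀ p ∈ S, ∀ q ∈ S, dist p q ≤ 3)) := by
  refine ⟨⟨{A, B, C, D}, card_eq, fun p hp q hq => ?_, by simpa using not_collinear,
    fun p hp q hq => ?_, A, by simp, C, by simp, dist_A_C⟩, ?_⟩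
  · obtain ⟨m, -, hm⟩ := dist_le_four p hp q hq
    exact ⟨m, hm⟩
  · obtain ⟨m, hm4, hm⟩ := dist_le_four p hp q hq
    rw [hm]
    exact_mod_cast hm4
  · rintro ⟨S, hcard, hint, hncol, hle⟩
    refine hncol (collinear_of_card_eq_four_of_dist_le_three (by simp) hcard fun p hp q hq => ?_)
    obtain ⟨m, hm⟩ := hint p hp q hq
    exact ⟨m, by exact_mod_cast hm ▸ hle p hp q hq, hm⟩
end

section
/- The minimum diameter of a plane integral point set of 5 points is 7. -/
/-!
The configuration `0, 3, 4, 7` on a line, together with the apex of the isosceles triangle with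
base `[0, 7]` and legs `4`, has all distances integral and diameter `7`: the apex lies at
distance `2` from `3` and `4`.

For the lower bound fix two points `p₀, p₁` of the set and a third point `p₂` off the line
`p₀p₁`. Sixteen times the product of the signed areas of `p₀p₁p` and `p₀p₁q` is an integer
polynomial in the six distances among `p₀, p₁, p, q`, so on `p₂, p₃, p₄` these products form an
integer matrix `(sᵢ sⱼ)` with `s₂ ≠ 0`. An exhaustive search shows that no ten distances in
`1, …, 6` make that matrix rank one.
-/

open Module Finset

/-- `heronProd d a b a' b' c` expresses `16 A A'`, for the signed areas `A, A'` of triangles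
`p₀p₁p` and `p₀p₁q`, through `d = |p₀p₁|`, `a = |pp₀|`, `b = |pp₁|`, `a' = |qp₀|`, `b' = |qp₁|`
and `c = |pq|`; for `p = q` it is Heron's formula. -/
def heronProd {R : Type*} [CommRing R] (d a b a' b' c : R) : R :=
  2 * d ^ 2 * (a ^ 2 + a' ^ 2 - c ^ 2) - (d ^ 2 + a ^ 2 - b ^ 2) * (d ^ 2 + a' ^ 2 - b' ^ 2)

@[norm_cast]
theorem Int.cast_heronProd {R : Type*} [CommRing R] (d a b a' b' c : ℤ) :
    ((heronProd d a b a' b' c : ℤ) : R) = heronProd (d : R) a b a' b' c := by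
  simp [heronProd]

def heronForm {X : Type*} [Dist X] (p₀ p₁ p q : X) : ℝ :=
  heronProd (dist p₀ p₁) (dist p p₀) (dist p p₁) (dist q p₀) (dist q p₁) (dist p q)

namespace Orientation

variable {V P : Type*} [NormedAddCommGroup V] [InnerProductSpace ℝ V] [MetricSpace P]
  [NormedAddTorsor V P] [Fact (finrank ℝ V = 2)] (o : Orientation ℝ V (Fin 2))

local notation "ω" => o.areaForm

theorem exists_eq_smul_of_areaForm_eq_zero {a x : V} (ha : a ≠ 0) (h : ω a x = 0) :
    ∃ r : ℝ, x = r • a := by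
  rcases le_total 0 (inner ℝ a x) with hx | hx
  · obtain ⟨r, -, hr⟩ := ((o.nonneg_inner_and_areaForm_eq_zero_iff_sameRay a x).1
      ⟨hx, h⟩).exists_nonneg_left ha
    exact ⟨r, hr.symm⟩
  · obtain ⟨r, -, hr⟩ := ((o.nonneg_inner_and_areaForm_eq_zero_iff_sameRay a (-x)).1
      ⟨by simpa [inner_neg_right] using hx, by simp [h]⟩).exists_nonneg_left ha
    exact ⟨-r, by rw [neg_smul, hr, neg_neg]⟩

theorem collinear_of_forall_areaForm_vsub_eq_zero {s : Set P} {p₀ p₁ : P} (hp₀ : p₀ ∈ s)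
    (h : p₀ ≠ p₁) (hs : ∀ p ∈ s, ω (p₁ -ᵥ p₀) (p -ᵥ p₀) = 0) : Collinear ℝ s := by
  rw [collinear_iff_of_mem hp₀]
  refine ⟨p₁ -ᵥ p₀, fun p hp => ?_⟩
  obtain ⟨r, hr⟩ := o.exists_eq_smul_of_areaForm_eq_zero (vsub_ne_zero.2 h.symm) (hs p hp)
  exact ⟨r, (eq_vadd_iff_vsub_eq _ _ _).2 hr⟩

theorem heronForm_eq (p₀ p₁ p q : P) :
    heronForm p₀ p₁ p q = 4 * (ω (p₁ -ᵥ p₀) (p -ᵥ p₀) * ω (p₁ -ᵥ p₀) (q -ᵥ p₀)) := by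
  have key := o.inner_mul_inner_add_areaForm_mul_areaForm (p₁ -ᵥ p₀) (p -ᵥ p₀) (q -ᵥ p₀)
  have h₁ := norm_sub_sq_real (p -ᵥ p₀) (p₁ -ᵥ p₀)
  have h₂ := norm_sub_sq_real (q -ᵥ p₀) (p₁ -ᵥ p₀)
  have h₃ := norm_sub_sq_real (p -ᵥ p₀) (q -ᵥ p₀)
  rw [vsub_sub_vsub_cancel_right] at h₁ h₂ h₃
  simp only [heronForm, heronProd, dist_comm p₀ p₁, dist_eq_norm_vsub V]
  rw [h₁, h₂, h₃, real_inner_comm (p₁ -ᵥ p₀) (p -ᵥ p₀), real_inner_comm (p₁ -ᵥ p₀) (q -ᵥ p₀)]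
  linear_combination (-4) * key

end Orientation

attribute [local instance] FiniteDimensional.of_fact_finrank_eq_two

theorem heronForm_mul_heronForm {V P : Type*} [NormedAddCommGroup V] [InnerProductSpace ℝ V]
    [MetricSpace P] [NormedAddTorsor V P] [Fact (finrank ℝ V = 2)] (p₀ p₁ p q r : P) :
    heronForm p₀ p₁ p p * heronForm p₀ p₁ q r = heronForm p₀ p₁ p q * heronForm p₀ p₁ p r := by
  let o : Orientation ℝ V (Fin 2) := (finBasisOfFinrankEq ℝ V Fact.out).orientation
  simp only [o.heronForm_eq]
  ring

theorem exists_mem_heronForm_self_pos {V P : Type*} [NormedAddCommGroup V]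
    [InnerProductSpace ℝ V] [MetricSpace P] [NormedAddTorsor V P] [Fact (finrank ℝ V = 2)]
    {s : Set P} {p₀ p₁ : P} (hp₀ : p₀ ∈ s) (h : p₀ ≠ p₁) (hs : ¬ Collinear ℝ s) :
    ∃ p ∈ s, 0 < heronForm p₀ p₁ p p := by
  let o : Orientation ℝ V (Fin 2) := (finBasisOfFinrankEq ℝ V Fact.out).orientation
  by_contra! hle
  refine hs (o.collinear_of_forall_areaForm_vsub_eq_zero hp₀ h fun p hp => ?_)
  have hp := hle p hp
  rw [o.heronForm_eq] at hp
  nlinarith [sq_nonneg (o.areaForm (p₁ -ᵥ p₀) (p -ᵥ p₀))]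

theorem heronProd_not_rank_one_Icc_one_six :
    ∀ d ∈ Icc (1 : ℤ) 6, ∀ a₂ ∈ Icc 1 6, ∀ b₂ ∈ Icc 1 6,
      0 < heronProd d a₂ b₂ a₂ b₂ 0 →
    ∀ a₃ ∈ Icc 1 6, ∀ b₃ ∈ Icc 1 6, ∀ c₂₃ ∈ Icc 1 6,
      heronProd d a₂ b₂ a₂ b₂ 0 * heronProd d a₃ b₃ a₃ b₃ 0 =
        heronProd d a₂ b₂ a₃ b₃ c₂₃ * heronProd d a₂ b₂ a₃ b₃ c₂₃ →
    ∀ a₄ ∈ Icc 1 6, ∀ b₄ ∈ Icc 1 6, ∀ c₂₄ ∈ Icc 1 6,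
      heronProd d a₂ b₂ a₂ b₂ 0 * heronProd d a₄ b₄ a₄ b₄ 0 =
        heronProd d a₂ b₂ a₄ b₄ c₂₄ * heronProd d a₂ b₂ a₄ b₄ c₂₄ →
    ∀ c₃₄ ∈ Icc 1 6,
      heronProd d a₂ b₂ a₂ b₂ 0 * heronProd d a₃ b₃ a₄ b₄ c₃₄ ≠
        heronProd d a₂ b₂ a₃ b₃ c₂₃ * heronProd d a₂ b₂ a₄ b₄ c₂₄ := by
  decide +kernel

def HasIntDistIn {X : Type*} [Dist X] (s : Finset ℤ) (p q : X) : Prop := ∃ m ∈ s, dist p q = m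

theorem heronForm_self_nonpos_of_hasIntDistIn_Icc_one_six {V P : Type*} [NormedAddCommGroup V]
    [InnerProductSpace ℝ V] [MetricSpace P] [NormedAddTorsor V P] [Fact (finrank ℝ V = 2)]
    {p₀ p₁ p₂ p₃ p₄ : P} (hd : HasIntDistIn (Icc 1 6) p₀ p₁)
    (ha₂ : HasIntDistIn (Icc 1 6) p₂ p₀) (hb₂ : HasIntDistIn (Icc 1 6) p₂ p₁)
    (ha₃ : HasIntDistIn (Icc 1 6) p₃ p₀) (hb₃ : HasIntDistIn (Icc 1 6) p₃ p₁)
    (ha₄ : HasIntDistIn (Icc 1 6) p₄ p₀) (hb₄ : HasIntDistIn (Icc 1 6) p₄ p₁)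
    (hc₂₃ : HasIntDistIn (Icc 1 6) p₂ p₃) (hc₂₄ : HasIntDistIn (Icc 1 6) p₂ p₄)
    (hc₃₄ : HasIntDistIn (Icc 1 6) p₃ p₄) : heronForm p₀ p₁ p₂ p₂ ≤ 0 := by
  by_contra! h₂
  obtain ⟨d, hdI, hd⟩ := hd
  obtain ⟨a₂, ha₂I, ha₂⟩ := ha₂
  obtain ⟨b₂, hb₂I, hb₂⟩ := hb₂
  obtain ⟨a₃, ha₃I, ha₃⟩ := ha₃
  obtain ⟨b₃, hb₃I, hb₃⟩ := hb₃
  obtain ⟨a₄, ha₄I, ha₄⟩ := ha₄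
  obtain ⟨b₄, hb₄I, hb₄⟩ := hb₄
  obtain ⟨c₂₃, hc₂₃I, hc₂₃⟩ := hc₂₃
  obtain ⟨c₂₄, hc₂₄I, hc₂₄⟩ := hc₂₄
  obtain ⟨c₃₄, hc₃₄I, hc₃₄⟩ := hc₃₄
  have h₃₃ := heronForm_mul_heronForm p₀ p₁ p₂ p₃ p₃
  have h₄₄ := heronForm_mul_heronForm p₀ p₁ p₂ p₄ p₄
  have h₃₄ := heronForm_mul_heronForm p₀ p₁ p₂ p₃ p₄
  simp only [heronForm, dist_self, hd, ha₂, hb₂, ha₃, hb₃, ha₄, hb₄, hc₂₃, hc₂₄, hc₃₄]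
    at h₂ h₃₃ h₄₄ h₃₄
  exact heronProd_not_rank_one_Icc_one_six d hdI a₂ ha₂I b₂ hb₂I (by exact_mod_cast h₂)
    a₃ ha₃I b₃ hb₃I c₂₃ hc₂₃I (by exact_mod_cast h₃₃) a₄ ha₄I b₄ hb₄I c₂₄ hc₂₄I
    (by exact_mod_cast h₄₄) c₃₄ hc₃₄I (by exact_mod_cast h₃₄)

theorem Finset.exists_pair_notMem_of_five_le_card {α : Type*} [DecidableEq α] {S : Finset α}
    (hS : 5 ≤ #S) (a b c : α) :
    ∃ x ∈ S, ∃ y ∈ S, x ≠ y ∧ x ∉ ({a, b, c} : Finset α) ∧ y ∉ ({a, b, c} : Finset α) := by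
  have : 1 < #(S \ {a, b, c}) := by
    have := le_card_sdiff {a, b, c} S
    have := card_le_three (a := a) (b := b) (c := c)
    omega
  obtain ⟨x, hx, y, hy, hxy⟩ := one_lt_card.1 this
  rw [mem_sdiff] at hx hy
  exact ⟨x, hx.1, y, hy.1, hxy, hx.2, hy.2⟩

theorem collinear_of_card_eq_five_of_dist_le_six {V P : Type*} [NormedAddCommGroup V]
    [InnerProductSpace ℝ V] [MetricSpace P] [NormedAddTorsor V P] [Fact (finrank ℝ V = 2)]
    {S : Finset P} (hS : #S = 5) (hint : ∀ p ∈ S, ∀ q ∈ S, ∃ m : ℕ, dist p q = m)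
    (hle : ∀ p ∈ S, ∀ q ∈ S, dist p q ≤ 6) : Collinear ℝ (S : Set P) := by
  classical
  by_contra hncol
  have hdist : ∀ p ∈ S, ∀ q ∈ S, p ≠ q → HasIntDistIn (Icc 1 6) p q := by
    intro p hp q hq hpq
    obtain ⟨m, hm⟩ := hint p hp q hq
    have hpos : (0 : ℝ) < m := hm ▸ dist_pos.2 hpq
    have hle' : (m : ℝ) ≤ 6 := hm ▸ hle p hp q hq
    exact ⟨m, mem_Icc.2 ⟨by exact_mod_cast hpos, by exact_mod_cast hle'⟩, by exact_mod_cast hm⟩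
  obtain ⟨p₀, hp₀, p₁, hp₁, h₀₁⟩ := one_lt_card.1 (by omega : 1 < #S)
  obtain ⟨p₂, hp₂, h₂⟩ := exists_mem_heronForm_self_pos hp₀ h₀₁ hncol
  have h₂₀ : p₂ ≠ p₀ := by rintro rfl; simp [heronForm, heronProd] at h₂
  have h₂₁ : p₂ ≠ p₁ := by
    rintro rfl
    simp only [heronForm, heronProd, dist_self, dist_comm p₂ p₀] at h₂
    linarith
  obtain ⟨p₃, hp₃, p₄, hp₄, h₃₄, h₃, h₄⟩ := exists_pair_notMem_of_five_le_card hS.ge p₀ p₁ p₂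
  simp only [mem_insert, mem_singleton, not_or] at h₃ h₄
  exact h₂.not_ge (heronForm_self_nonpos_of_hasIntDistIn_Icc_one_six (hdist _ hp₀ _ hp₁ h₀₁)
    (hdist _ hp₂ _ hp₀ h₂₀) (hdist _ hp₂ _ hp₁ h₂₁) (hdist _ hp₃ _ hp₀ h₃.1)
    (hdist _ hp₃ _ hp₁ h₃.2.1) (hdist _ hp₄ _ hp₀ h₄.1) (hdist _ hp₄ _ hp₁ h₄.2.1)
    (hdist _ hp₂ _ hp₃ (Ne.symm h₃.2.2)) (hdist _ hp₂ _ hp₄ (Ne.symm h₄.2.2))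
    (hdist _ hp₃ _ hp₄ h₃₄))

theorem Collinear.dist_add_dist_eq_or {E P : Type*} [SeminormedAddCommGroup E] [NormedSpace ℝ E]
    [PseudoMetricSpace P] [NormedAddTorsor E P] {x y z : P}
    (h : Collinear ℝ ({x, y, z} : Set P)) :
    dist x y + dist y z = dist x z ∨ dist y z + dist z x = dist y x ∨
      dist z x + dist x y = dist z y := by
  rcases h.wbtw_or_wbtw_or_wbtw with h | h | h
  exacts [Or.inl h.dist_add_dist, Or.inr (Or.inl h.dist_add_dist), Or.inr (Or.inr h.dist_add_dist)]

noncomputable def diam7Points : Fin 5 → EuclideanSpace ℝ (Fin 2) :=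
  ![!₂[0, 0], !₂[3, 0], !₂[4, 0], !₂[7, 0], !₂[7 / 2, √15 / 2]]

def diam7Dist : Fin 5 → Fin 5 → ℕ :=
  ![![0, 3, 4, 7, 4], ![3, 0, 1, 4, 2], ![4, 1, 0, 3, 2], ![7, 4, 3, 0, 4], ![4, 2, 2, 4, 0]]

theorem dist_diam7Points (i j : Fin 5) :
    dist (diam7Points i) (diam7Points j) = diam7Dist i j := by
  rw [← sq_eq_sq₀ dist_nonneg (Nat.cast_nonneg _), EuclideanSpace.dist_eq,
    Real.sq_sqrt (by positivity)]
  fin_cases i <;> fin_cases j <;>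
    norm_num [diam7Points, diam7Dist, Fin.sum_univ_two, Real.dist_eq, div_pow]

theorem diam7Points_injective : Function.Injective diam7Points := by
  intro i j h
  have hij := dist_diam7Points i j
  rw [h, dist_self, eq_comm, Nat.cast_eq_zero] at hij
  have hdiag : ∀ i j, diam7Dist i j = 0 → i = j := by decide
  exact hdiag i j hij

theorem not_collinear_diam7Points : ¬ Collinear ℝ (Set.range diam7Points) := by
  intro h
  have hsub : {diam7Points 0, diam7Points 3, diam7Points 4} ⊆ Set.range diam7Points := by
    rintro _ (rfl | rfl | rfl) <;> exact Set.mem_range_self _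
  have hsum := (h.subset hsub).dist_add_dist_eq_or
  simp only [dist_diam7Points] at hsum
  norm_cast at hsum

/-- The minimum diameter of a 5-point plane integral point set is `7`:
there exist 5 non-collinear points with pairwise integral distances and largest
distance `7`, and no such configuration has all pairwise distances at most `6`. -/
theorem min_diameter_five_points :
    (∃ S : Finset (EuclideanSpace ℝ (Fin 2)), S.card = 5 ∧
      (∀ p ∈ S, ∀ q ∈ S, ∃ m : ℕ, dist p q = m) ∧
      ¬ Collinear ℝ (S : Set (EuclideanSpace ℝ (Fin 2))) ∧
      (∀ p ∈ S, ∀ q ∈ S, dist p q ≤ 7) ∧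
      (∃ p ∈ S, ∃ q ∈ S, dist p q = 7)) ∧
    ¬ (∃ S : Finset (EuclideanSpace ℝ (Fin 2)), S.card = 5 ∧
      (∀ p ∈ S, ∀ q ∈ S, ∃ m : ℕ, dist p q = m) ∧
      ¬ Collinear ℝ (S : Set (EuclideanSpace ℝ (Fin 2))) ∧
      (∀ p ∈ S, ∀ q ∈ S, dist p q ≤ 6)) := by
  refine ⟨⟨univ.image diam7Points, ?_, ?_, ?_, ?_, ?_⟩, ?_⟩
  · rw [card_image_of_injective _ diam7Points_injective, card_univ, Fintype.card_fin]
  · simp only [mem_image, mem_univ, true_and, forall_exists_index, forall_apply_eq_imp_iff]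
    exact fun i j => ⟨_, dist_diam7Points i j⟩
  · rw [coe_image, coe_univ, Set.image_univ]
    exact not_collinear_diam7Points
  · simp only [mem_image, mem_univ, true_and, forall_exists_index, forall_apply_eq_imp_iff,
      dist_diam7Points]
    have hle : ∀ i j, diam7Dist i j ≤ 7 := by decide
    exact fun i j => by exact_mod_cast hle i j
  · exact ⟨_, mem_image_of_mem _ (mem_univ 0), _, mem_image_of_mem _ (mem_univ 3),
      by rw [dist_diam7Points]; rfl⟩
  · rintro ⟨S, hS, hint, hncol, hle⟩
    have : Fact (finrank ℝ (EuclideanSpace ℝ (Fin 2)) = 2) := ⟨finrank_euclideanSpace_fin⟩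
    exact hncol (collinear_of_card_eq_five_of_dist_le_six hS hint hle)
end

section
/- There exist 7 points in the plane, no three collinear and no four concyclic, with all pairwise distances integers and maximum distance 22270. -/
/-!
Kurz and Wassermann's set has characteristic `2002`: it can be placed with all its points in
`ℚ × ℚ √2002`. For such points the squared distances are rational, and the orientation and
in-circle determinants are `√2002` times rational numbers. Integrality of the distances, absence
of collinear triples and of concyclic quadruples thus reduce to finitely many identities and
inequalities in `ℚ`, checked by direct computation.
-/

open EuclideanGeometry Finset

namespace IntegralPointSet

section Determinants

variable {R : Type*} [CommRing R]

def quadForm (d : R) (a : R × R) : R := a.1 ^ 2 + d * a.2 ^ 2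

def orient (a b c : R × R) : R := (b.1 - a.1) * (c.2 - a.2) - (b.2 - a.2) * (c.1 - a.1)

/-- Vanishes when `a, b, c, e` lie on a common curve `x² + d y² + u x + v y + w = 0`. -/
def inCircle (d : R) (a b c e : R × R) : R :=
  (quadForm d b - quadForm d a) * orient a c e
    - (quadForm d c - quadForm d a) * orient a b e
    + (quadForm d e - quadForm d a) * orient a b c

theorem inCircle_one_scale_snd (s : R) (a b c e : R × R) :
    inCircle 1 (a.1, s * a.2) (b.1, s * b.2) (c.1, s * c.2) (e.1, s * e.2) =
      s * inCircle (s ^ 2) a b c e := by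
  simp only [inCircle, orient, quadForm]; ring

end Determinants

def coords (p : EuclideanSpace ℝ (Fin 2)) : ℝ × ℝ := (p 0, p 1)

theorem dist_sq_eq_quadForm (p q : EuclideanSpace ℝ (Fin 2)) :
    dist p q ^ 2 = quadForm 1 (coords p - coords q) := by
  simp [EuclideanSpace.dist_sq_eq, Fin.sum_univ_two, Real.dist_eq, quadForm, coords]

theorem orient_eq_zero_of_collinear {p q r : EuclideanSpace ℝ (Fin 2)}
    (h : Collinear ℝ {p, q, r}) : orient (coords p) (coords q) (coords r) = 0 := by
  obtain ⟨v, hv⟩ := (collinear_iff_of_mem (Set.mem_insert p _)).1 h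
  obtain ⟨a, rfl⟩ := hv q (by simp)
  obtain ⟨b, rfl⟩ := hv r (by simp)
  simp only [orient, coords, PiLp.add_apply, PiLp.smul_apply, smul_eq_mul, vadd_eq_add]
  ring

theorem inCircle_eq_zero_of_cospherical {p q r s : EuclideanSpace ℝ (Fin 2)}
    (h : Cospherical {p, q, r, s}) :
    inCircle 1 (coords p) (coords q) (coords r) (coords s) = 0 := by
  obtain ⟨c, ρ, hc⟩ := h
  have hsq : ∀ x ∈ ({p, q, r, s} : Set _), quadForm 1 (coords x - coords c) = ρ ^ 2 :=
    fun x hx => by rw [← dist_sq_eq_quadForm, hc x hx]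
  have hp := hsq p (by simp)
  have hq := hsq q (by simp)
  have hr := hsq r (by simp)
  have hs := hsq s (by simp)
  simp only [quadForm, coords, Prod.fst_sub, Prod.snd_sub] at hp hq hr hs
  simp only [inCircle, quadForm, coords]
  -- Subtracting the circle equation at `p` turns the first column into `2 c` times the others.
  linear_combination (norm := skip) orient (coords p) (coords r) (coords s) * (hq - hp)
    - orient (coords p) (coords q) (coords s) * (hr - hp)
    + orient (coords p) (coords q) (coords r) * (hs - hp)
  simp only [orient, coords]
  ring

/-- Every plane integral point set is congruent to one made of such points, with `d` squarefree
(its characteristic). -/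
noncomputable def charPoint (d : ℕ) (a : ℚ × ℚ) : EuclideanSpace ℝ (Fin 2) :=
  !₂[a.1, √d * a.2]

variable {d : ℕ}

theorem coords_charPoint (a : ℚ × ℚ) :
    coords (charPoint d a) = ((a.1 : ℝ), √d * (a.2 : ℝ)) := rfl

theorem dist_charPoint_sq (a b : ℚ × ℚ) :
    dist (charPoint d a) (charPoint d b) ^ 2 = ((quadForm (d : ℚ) (a - b) : ℚ) : ℝ) := by
  rw [dist_sq_eq_quadForm, coords_charPoint, coords_charPoint]
  simp only [quadForm, Prod.fst_sub, Prod.snd_sub]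
  push_cast
  linear_combination ((a.2 : ℝ) - b.2) ^ 2 * Real.sq_sqrt (Nat.cast_nonneg d)

theorem dist_charPoint_eq_of_quadForm_eq {a b : ℚ × ℚ} {m : ℕ}
    (h : quadForm (d : ℚ) (a - b) = m ^ 2) : dist (charPoint d a) (charPoint d b) = m := by
  have hsq := dist_charPoint_sq (d := d) a b
  rw [h] at hsq
  push_cast at hsq
  exact (sq_eq_sq₀ dist_nonneg m.cast_nonneg).1 hsq

theorem orient_coords_charPoint (a b c : ℚ × ℚ) :
    orient (coords (charPoint d a)) (coords (charPoint d b)) (coords (charPoint d c)) =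
      √d * ((orient a b c : ℚ) : ℝ) := by
  simp only [coords_charPoint, orient]
  push_cast
  ring

theorem inCircle_coords_charPoint (a b c e : ℚ × ℚ) :
    inCircle 1 (coords (charPoint d a)) (coords (charPoint d b)) (coords (charPoint d c))
      (coords (charPoint d e)) = √d * ((inCircle (d : ℚ) a b c e : ℚ) : ℝ) := by
  rw [coords_charPoint, coords_charPoint, coords_charPoint, coords_charPoint]
  convert inCircle_one_scale_snd (√d) ((a.1 : ℝ), (a.2 : ℝ)) ((b.1 : ℝ), (b.2 : ℝ))
    ((c.1 : ℝ), (c.2 : ℝ)) ((e.1 : ℝ), (e.2 : ℝ)) using 2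
  rw [Real.sq_sqrt d.cast_nonneg]
  push_cast [inCircle, orient, quadForm]
  rfl

theorem not_collinear_charPoint (hd : d ≠ 0) {a b c : ℚ × ℚ} (h : orient a b c ≠ 0) :
    ¬ Collinear ℝ {charPoint d a, charPoint d b, charPoint d c} := by
  intro hcol
  have := orient_eq_zero_of_collinear hcol
  rw [orient_coords_charPoint] at this
  exact h (by simpa [hd] using this)

theorem not_cospherical_charPoint (hd : d ≠ 0) {a b c e : ℚ × ℚ}
    (h : inCircle (d : ℚ) a b c e ≠ 0) :
    ¬ Cospherical {charPoint d a, charPoint d b, charPoint d c, charPoint d e} := by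
  intro hcos
  have := inCircle_eq_zero_of_cospherical hcos
  rw [inCircle_coords_charPoint] at this
  exact h (by simpa [hd] using this)

def points22270 : Fin 7 → ℚ × ℚ :=
  ![(0, 0), (22270, 0), (133227 / 17, 3144 / 17), (30516246 / 2227, -54168 / 2227),
    (31979322 / 2227, 238464 / 2227), (322522 / 17, 3144 / 17),
    (23468272 / 2227, 932064 / 2227)]

def dists22270 : Fin 7 → Fin 7 → ℕ :=
  ![![0, 22270, 11397, 13746, 15138, 20698, 21488],
    ![22270, 0, 16637, 8636, 9248, 8908, 22098],
    ![11397, 16637, 0, 11049, 7395, 11135, 10795],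
    ![13746, 8636, 11049, 0, 5916, 10744, 20066],
    ![15138, 9248, 7395, 5916, 0, 5780, 14450],
    ![20698, 8908, 11135, 10744, 5780, 0, 13430],
    ![21488, 22098, 10795, 20066, 14450, 13430, 0]]

theorem quadForm_sub_points22270 (i j : Fin 7) :
    quadForm 2002 (points22270 i - points22270 j) = (dists22270 i j : ℚ) ^ 2 := by
  revert i j
  decide +kernel

theorem dists22270_pos {i j : Fin 7} (h : i ≠ j) : 0 < dists22270 i j := by
  revert i j
  decide

theorem dists22270_le (i j : Fin 7) : dists22270 i j ≤ 22270 := by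
  revert i j
  decide

theorem orient_points22270_ne_zero {i j k : Fin 7} (hij : i ≠ j) (hik : i ≠ k) (hjk : j ≠ k) :
    orient (points22270 i) (points22270 j) (points22270 k) ≠ 0 := by
  revert i j k
  decide +kernel

theorem inCircle_points22270_ne_zero {i j k l : Fin 7} (hij : i ≠ j) (hik : i ≠ k) (hil : i ≠ l)
    (hjk : j ≠ k) (hjl : j ≠ l) (hkl : k ≠ l) :
    inCircle 2002 (points22270 i) (points22270 j) (points22270 k) (points22270 l) ≠ 0 := by
  revert i j k l
  decide +kernel

end IntegralPointSet

open IntegralPointSet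

/-- There exist 7 points in the plane, no three collinear and no four concyclic,
with pairwise integral distances and maximum distance `22270`. -/
theorem exists_seven_point_general_position_diameter_22270 :
    ∃ S : Finset (EuclideanSpace ℝ (Fin 2)), S.card = 7 ∧
      (∀ p ∈ S, ∀ q ∈ S, ∃ m : ℕ, dist p q = m) ∧
      (∀ p ∈ S, ∀ q ∈ S, ∀ r ∈ S, p ≠ q → p ≠ r → q ≠ r →
        ¬ Collinear ℝ ({p, q, r} : Set (EuclideanSpace ℝ (Fin 2)))) ∧
      (∀ p ∈ S, ∀ q ∈ S, ∀ r ∈ S, ∀ s ∈ S,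
        p ≠ q → p ≠ r → p ≠ s → q ≠ r → q ≠ s → r ≠ s →
        ¬ EuclideanGeometry.Cospherical ({p, q, r, s} : Set (EuclideanSpace ℝ (Fin 2)))) ∧
      (∀ p ∈ S, ∀ q ∈ S, dist p q ≤ 22270) ∧
      (∃ p ∈ S, ∃ q ∈ S, dist p q = 22270) := by
  set P : Fin 7 → EuclideanSpace ℝ (Fin 2) := fun i => charPoint 2002 (points22270 i)
  have hdist (i j : Fin 7) : dist (P i) (P j) = dists22270 i j :=
    dist_charPoint_eq_of_quadForm_eq (by exact_mod_cast quadForm_sub_points22270 i j)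
  have hinj : Function.Injective P := fun i j hPij => by
    by_contra hij
    have hzero : (dists22270 i j : ℝ) = 0 := by rw [← hdist, hPij, dist_self]
    exact (dists22270_pos hij).ne' (by exact_mod_cast hzero)
  refine ⟨univ.image P, by rw [card_image_of_injective _ hinj]; rfl, ?_, ?_, ?_, ?_, ?_⟩ <;>
    simp only [mem_image, mem_univ, true_and, forall_exists_index, forall_apply_eq_imp_iff,
      exists_exists_eq_and]
  · exact fun i j => ⟨_, hdist i j⟩
  · intro i j k hij hik hjk
    exact not_collinear_charPoint (by norm_num) (orient_points22270_ne_zero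
      (ne_of_apply_ne P hij) (ne_of_apply_ne P hik) (ne_of_apply_ne P hjk))
  · intro i j k l hij hik hil hjk hjl hkl
    exact not_cospherical_charPoint (by norm_num) (inCircle_points22270_ne_zero
      (ne_of_apply_ne P hij) (ne_of_apply_ne P hik) (ne_of_apply_ne P hil)
      (ne_of_apply_ne P hjk) (ne_of_apply_ne P hjl) (ne_of_apply_ne P hkl))
  · exact fun i j => (hdist i j).trans_le (by exact_mod_cast dists22270_le i j)
  · exact ⟨0, 1, hdist 0 1⟩
end

section
/- The number of distinct characteristics occurring among integral triangles with diameter d is Ω(d²/(log d)²): there is a constant c > 0 such that for all sufficiently large d, at least c·d²/(log d)² distinct squarefree integers arise as characteristics of integral triangles with largest side d. -/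
/-- The set of characteristics (squarefree parts of `(a+b+c)(a+b-c)(a-b+c)(-a+b+c)`)
of non-degenerate integral triangles with largest side exactly `d`. -/
def charSet (d : ℕ) : Set ℕ :=
  {k | Squarefree k ∧ ∃ b c : ℕ, 0 < c ∧ c ≤ b ∧ b ≤ d ∧ d < b + c ∧
    ∃ w : ℕ, 0 < w ∧
      ((d : ℤ) + b + c) * ((d : ℤ) + b - c) * ((d : ℤ) - b + c) * (-(d : ℤ) + b + c)
        = (k : ℤ) * (w : ℤ) ^ 2}

/-!
For odd `p ≤ q ≤ d` the triangle with sides `d`, `d - (q - p) / 2`, `(p + q) / 2` has Heron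
product `p * q * (2 * d + p) * (2 * d - q)`. Take primes `p ∈ (d/16, d/4]` and `q ∈ (d/4, d]`;
discarding at most one `q` and, for each `q`, at most three `p` (those with `q ∣ 2d`, `p ∣ 2d`,
`p ∣ 2d - q` or `q ∣ 2d + p`), both `p` and `q` divide the product exactly once and hence divide
its squarefree part. A characteristic is at most `12 d⁴`, so it has at most four prime
factors above `d/16`, and each characteristic comes from at most `16` pairs. Chebyshev's bounds
`θ n ≥ n log 2 - o(n)` and `θ n ≤ n log 4` give `≫ n / log n` primes in `(n/4, n]`, hence
`≫ d² / (log d)²` pairs.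
-/

open Finset Real Filter Asymptotics Chebyshev

def primesIoc (m n : ℕ) : Finset ℕ := {p ∈ Ioc m n | p.Prime}

lemma card_filter_primeFactors_lt {m n j : ℕ} (hn : n ≠ 0) (h : n < (m + 1) ^ j) :
    #{p ∈ n.primeFactors | m < p} < j := by
  by_contra! hj
  refine h.not_ge (calc
    (m + 1) ^ j ≤ (m + 1) ^ #{p ∈ n.primeFactors | m < p} := Nat.pow_le_pow_right m.succ_pos hj
    _ ≤ ∏ p ∈ n.primeFactors with m < p, p :=
      pow_card_le_prod _ _ _ fun p hp => (mem_filter.1 hp).2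
    _ ≤ n := Nat.le_of_dvd (Nat.pos_of_ne_zero hn) <|
      (prod_dvd_prod_of_subset _ _ _ (filter_subset _ _)).trans n.prod_primeFactors_dvd)

lemma card_primesIoc_filter_dvd_lt {m M n j : ℕ} (hn : n ≠ 0) (h : n < (m + 1) ^ j) :
    #{p ∈ primesIoc m M | p ∣ n} < j := by
  refine lt_of_le_of_lt (card_le_card fun p hp => ?_) (card_filter_primeFactors_lt hn h)
  simp only [primesIoc, mem_filter, mem_Ioc] at hp
  exact mem_filter.2 ⟨Nat.mem_primeFactors.2 ⟨hp.1.2, hp.2, hn⟩, hp.1.1.1⟩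

lemma card_filter_dvd_add_le_one {a b q n : ℕ} (h : b ≤ a + q) :
    #{p ∈ Ioc a b | q ∣ n + p} ≤ 1 := by
  refine card_le_one.2 fun p₁ h₁ p₂ h₂ => ?_
  simp only [mem_filter, mem_Ioc] at h₁ h₂
  have hdvd : (q : ℤ) ∣ (p₁ : ℤ) - p₂ := by
    have := Int.dvd_sub (Int.natCast_dvd_natCast.2 h₁.2) (Int.natCast_dvd_natCast.2 h₂.2)
    simpa using this
  have := Int.eq_zero_of_abs_lt_dvd hdvd (by rw [abs_lt]; omega)
  omega

lemma card_le_mul_card_image_of_mem {α β : Type*} [DecidableEq β] {G : Finset (Σ _ : α, α)}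
    {κ : (Σ _ : α, α) → β} {S : β → Finset α} {r : ℕ}
    (hmem : ∀ x ∈ G, x.1 ∈ S (κ x) ∧ x.2 ∈ S (κ x)) (hcard : ∀ x ∈ G, #(S (κ x)) ≤ r) :
    #G ≤ r * r * #(G.image κ) := by
  refine card_le_mul_card_image G _ fun b hb => ?_
  obtain ⟨x, hx, rfl⟩ := mem_image.1 hb
  calc #{y ∈ G | κ y = κ x} ≤ #(S (κ x) ×ˢ S (κ x)) := by
        refine card_le_card_of_injOn (fun y => (y.1, y.2)) (fun y hy => ?_)
          fun y _ z _ h => ?_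
        · obtain ⟨hyG, hyx⟩ := mem_filter.1 hy
          exact mem_product.2 (hyx ▸ hmem y hyG)
        · exact Sigma.ext (congrArg Prod.fst h) (heq_of_eq (congrArg Prod.snd h))
    _ ≤ r * r := by rw [card_product]; exact Nat.mul_le_mul (hcard x hx) (hcard x hx)

lemma Nat.Prime.dvd_of_sq_mul_eq_mul {p a b m : ℕ} (hp : p.Prime) (h : b ^ 2 * a = p * m)
    (hm : ¬ p ∣ m) : p ∣ a := by
  by_contra ha
  have hb : p ∣ b := hp.dvd_of_dvd_pow <|
    (hp.dvd_mul.1 (h ▸ dvd_mul_right p m)).resolve_right ha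
  have : p * p ∣ p * m := h ▸ (pow_two p ▸ pow_dvd_pow_of_dvd hb 2).mul_right a
  exact hm (Nat.dvd_of_mul_dvd_mul_left hp.pos this)

lemma theta_sub_theta_le_card_primesIoc_mul_log {m n : ℕ} (h : m ≤ n) :
    θ n - θ m ≤ #(primesIoc m n) * log n := by
  have hsplit : θ n = θ m + ∑ p ∈ primesIoc m n, log p := by
    simp only [theta, Nat.floor_natCast, primesIoc]
    rw [← Ioc_union_Ioc_eq_Ioc (Nat.zero_le m) h, filter_union,
      sum_union (disjoint_filter_filter (Ioc_disjoint_Ioc_of_le le_rfl))]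
  rw [hsplit, add_sub_cancel_left, ← nsmul_eq_mul]
  refine sum_le_card_nsmul _ _ _ fun p hp => ?_
  simp only [primesIoc, mem_filter, mem_Ioc] at hp
  exact log_le_log (mod_cast hp.2.pos) (mod_cast hp.1.2)

lemma isLittleO_sqrt_mul_log : (fun x => √x * log x) =o[atTop] id := by
  have hlog : log =o[atTop] sqrt := by
    convert isLittleO_log_rpow_atTop (r := 1 / 2) (by norm_num) using 1
    exact funext sqrt_eq_rpow
  refine ((isBigO_refl sqrt atTop).mul_isLittleO hlog).trans_eventuallyEq ?_
  filter_upwards [eventually_ge_atTop 0] with x hx using mul_self_sqrt hx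

lemma eventually_le_four_mul_card_primesIoc_mul_log :
    ∀ᶠ n : ℕ in atTop, (n : ℝ) ≤ 4 * #(primesIoc (n / 4) n) * log n := by
  have hsmall : ∀ᶠ x : ℝ in atTop, √x * log x ≤ x / 48 := by
    filter_upwards [isLittleO_sqrt_mul_log.bound (c := 1 / 48) (by norm_num),
      eventually_ge_atTop 0] with x hx hx₀
    rw [id, norm_of_nonneg hx₀] at hx
    linarith [le_norm_self (√x * log x)]
  filter_upwards [tendsto_natCast_atTop_atTop.eventually hsmall, eventually_ge_atTop 2]
    with n hn hn₂
  have hn₂' : (2 : ℝ) ≤ n := mod_cast hn₂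
  have hlog_succ : log (n + 1) ≤ 2 * √n * log n := by
    have h₁ : log (n + 1) ≤ 2 * log n :=
      calc log (n + 1)
          ≤ log ((n : ℝ) ^ 2) := log_le_log (by positivity) (by nlinarith)
        _ = 2 * log n := by rw [log_pow]; norm_num
    have h₂ : 1 ≤ √n := one_le_sqrt.2 (by linarith)
    nlinarith [log_nonneg (show (1 : ℝ) ≤ n by linarith)]
  have hquarter : log 4 * ((n / 4 : ℕ) : ℝ) ≤ log 2 / 2 * n :=
    calc log 4 * ((n / 4 : ℕ) : ℝ)
        ≤ log 4 * (n / 4) := by gcongr; exact Nat.cast_div_le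
      _ = log 2 / 2 * n := by
        rw [show (4 : ℝ) = 2 ^ 2 by norm_num, log_pow]; push_cast; ring
  have hlog2 : 0.69 * (n : ℝ) ≤ log 2 * n :=
    mul_le_mul_of_nonneg_right (by linarith [log_two_gt_d9]) (Nat.cast_nonneg n)
  have := theta_sub_theta_le_card_primesIoc_mul_log (Nat.div_le_self n 4)
  have := theta_ge n
  have := theta_le_log4_mul_x (x := ((n / 4 : ℕ) : ℝ)) (by positivity)
  linarith

lemma exists_triangle_heron_eq {d p q : ℕ} (hp : Odd p) (hq : Odd q) (hpq : p ≤ q)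
    (hqd : q ≤ d) :
    ∃ b c : ℕ, 0 < c ∧ c ≤ b ∧ b ≤ d ∧ d < b + c ∧
      ((d : ℤ) + b + c) * ((d : ℤ) + b - c) * ((d : ℤ) - b + c) * (-(d : ℤ) + b + c)
        = ((p * q * (2 * d + p) * (2 * d - q) : ℕ) : ℤ) := by
  obtain ⟨a, rfl⟩ := hp
  obtain ⟨e, rfl⟩ := hq
  refine ⟨d + a - e, a + e + 1, by omega, by omega, by omega, by omega, ?_⟩
  push_cast [Nat.cast_sub (show e ≤ d + a by omega),
    Nat.cast_sub (show 2 * e + 1 ≤ 2 * d by omega)]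
  ring

lemma le_twelve_mul_pow_four_of_mem_charSet {d k : ℕ} (hk : k ∈ charSet d) :
    k ≤ 12 * d ^ 4 := by
  obtain ⟨-, b, c, hc, hcb, hbd, hdbc, w, hw, heq⟩ := hk
  have hk : (k : ℤ) ≤ k * w ^ 2 :=
    le_mul_of_one_le_right (by positivity) (one_le_pow₀ (by omega))
  have : ((d : ℤ) + b + c) * ((d : ℤ) + b - c) * ((d : ℤ) - b + c) * (-(d : ℤ) + b + c)
      ≤ (3 * d) * (2 * d) * (2 * d) * d := by
    gcongr <;> omega
  have : (k : ℤ) ≤ 12 * d ^ 4 := by linarith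
  exact_mod_cast this

lemma finite_charSet (d : ℕ) : (charSet d).Finite :=
  (Set.finite_Iic _).subset fun _ hk => le_twelve_mul_pow_four_of_mem_charSet hk

lemma exists_mem_charSet_dvd_dvd {d p q : ℕ} (hp : p.Prime) (hq : q.Prime) (hp₂ : p ≠ 2)
    (hpq : p < q) (hqd : q ≤ d) (hp_two_mul : ¬ p ∣ 2 * d) (hq_two_mul : ¬ q ∣ 2 * d)
    (hp_sub : ¬ p ∣ 2 * d - q) (hq_add : ¬ q ∣ 2 * d + p) :
    ∃ k ∈ charSet d, p ∣ k ∧ q ∣ k := by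
  obtain ⟨b, c, hc, hcb, hbd, hdbc, hheron⟩ := exists_triangle_heron_eq
    (hp.odd_of_ne_two hp₂) (hq.odd_of_ne_two (by have := hp.two_le; omega)) hpq.le hqd
  have hN : 0 < p * q * (2 * d + p) * (2 * d - q) := by
    have := hp.pos; have := hq.pos; have : 0 < 2 * d - q := by omega
    positivity
  obtain ⟨k, w, -, hw, hwk, hk⟩ := Nat.sq_mul_squarefree_of_pos hN
  refine ⟨k, ⟨hk, b, c, hc, hcb, hbd, hdbc, w, hw, ?_⟩, ?_, ?_⟩
  · rw [hheron, ← hwk]; push_cast; ring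
  · refine hp.dvd_of_sq_mul_eq_mul (m := q * (2 * d + p) * (2 * d - q))
      (hwk.trans (by ring)) ?_
    simp only [hp.dvd_mul, not_or]
    exact ⟨⟨(Nat.prime_dvd_prime_iff_eq hp hq).not.2 hpq.ne,
      fun h => hp_two_mul ((Nat.dvd_add_left (dvd_refl p)).1 h)⟩, hp_sub⟩
  · refine hq.dvd_of_sq_mul_eq_mul (m := p * (2 * d + p) * (2 * d - q))
      (hwk.trans (by ring)) ?_
    simp only [hq.dvd_mul, not_or]
    refine ⟨⟨Nat.not_dvd_of_pos_of_lt hp.pos hpq, hq_add⟩, fun h => hq_two_mul ?_⟩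
    simpa [Nat.sub_add_cancel (show q ≤ 2 * d by omega)] using Nat.dvd_add h (dvd_refl q)

lemma card_filter_primeFactors_lt_five_of_mem_charSet {d k : ℕ} (hd : 2 ^ 24 ≤ d)
    (hk : k ∈ charSet d) : #{p ∈ k.primeFactors | d / 16 < p} < 5 := by
  refine card_filter_primeFactors_lt hk.1.ne_zero ?_
  set m := d / 16
  have hd4 : d ^ 4 < (16 * (m + 1)) ^ 4 := Nat.pow_lt_pow_left (by omega) (by norm_num)
  have hm : 786432 * (m + 1) ^ 4 < (m + 1) * (m + 1) ^ 4 :=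
    Nat.mul_lt_mul_of_pos_right (by omega) (by positivity)
  calc k ≤ 12 * d ^ 4 := le_twelve_mul_pow_four_of_mem_charSet hk
    _ < 786432 * (m + 1) ^ 4 := by linarith
    _ < (m + 1) ^ 5 := by linarith

lemma card_primesIoc_sub_three_le_card_filter {d q : ℕ} (hd : 2 ^ 24 ≤ d) (hq : d / 4 < q)
    (hqd : q ≤ d) :
    #(primesIoc (d / 16) (d / 4)) - 3 ≤
      #{p ∈ primesIoc (d / 16) (d / 4) | ¬ (p ∣ 2 * d ∨ p ∣ 2 * d - q ∨ q ∣ 2 * d + p)} := by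
  have hsq : 2 * d < (d / 16 + 1) ^ 2 := by
    nlinarith [Nat.lt_div_mul_add (a := d) (show 0 < 16 by norm_num)]
  have h₁ := card_primesIoc_filter_dvd_lt (M := d / 4) (by omega) hsq
  have h₂ :=
    card_primesIoc_filter_dvd_lt (M := d / 4) (by omega) ((Nat.sub_le _ q).trans_lt hsq)
  have h₃ : #{p ∈ primesIoc (d / 16) (d / 4) | q ∣ 2 * d + p} ≤ 1 :=
    (card_le_card (filter_subset_filter _ (filter_subset _ _))).trans
      (card_filter_dvd_add_le_one (by omega))
  have hbad := (card_union_le _ _).trans (add_le_add (Nat.le_of_lt_succ h₁)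
    ((card_union_le _ _).trans (add_le_add (Nat.le_of_lt_succ h₂) h₃)))
  rw [← filter_or, ← filter_or] at hbad
  have := card_filter_add_card_filter_not (s := primesIoc (d / 16) (d / 4))
    (fun p => p ∣ 2 * d ∨ p ∣ 2 * d - q ∨ q ∣ 2 * d + p)
  omega

lemma card_sub_one_mul_card_sub_three_le_ncard_charSet {d : ℕ} (hd : 2 ^ 24 ≤ d) :
    (#(primesIoc (d / 4) d) - 1) * (#(primesIoc (d / 16) (d / 4)) - 3) ≤
      16 * (charSet d).ncard := by
  set P := primesIoc (d / 16) (d / 4)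
  set Q := {q ∈ primesIoc (d / 4) d | ¬ q ∣ 2 * d}
  set G := Q.sigma fun q => {p ∈ P | ¬ (p ∣ 2 * d ∨ p ∣ 2 * d - q ∨ q ∣ 2 * d + p)}
  have hQ : #(primesIoc (d / 4) d) - 1 ≤ #Q := by
    have : #{q ∈ primesIoc (d / 4) d | q ∣ 2 * d} + #Q = #(primesIoc (d / 4) d) :=
      card_filter_add_card_filter_not _
    have := card_primesIoc_filter_dvd_lt (M := d) (n := 2 * d) (by omega)
      (show 2 * d < (d / 4 + 1) ^ 2 by nlinarith [Nat.lt_div_mul_add (a := d) four_pos])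
    omega
  have hG : #Q * (#P - 3) ≤ #G := by
    rw [card_sigma, ← smul_eq_mul]
    refine card_nsmul_le_sum _ _ _ fun q hq => ?_
    simp only [Q, primesIoc, mem_filter, mem_Ioc] at hq
    exact card_primesIoc_sub_three_le_card_filter hd hq.1.1.1 hq.1.1.2
  have hκ : ∀ x ∈ G, ∃ k ∈ charSet d, x.2 ∣ k ∧ x.1 ∣ k := by
    rintro ⟨q, p⟩ hx
    dsimp only
    simp only [G, Q, P, primesIoc, mem_sigma, mem_filter, mem_Ioc, not_or] at hx
    obtain ⟨⟨⟨⟨hq₁, hq₂⟩, hq⟩, hq_two_mul⟩, ⟨⟨hp₁, hp₂⟩, hp⟩, hp_two_mul, hp_sub, hq_add⟩ := hx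
    exact exists_mem_charSet_dvd_dvd hp hq (by omega) (by omega) hq₂ hp_two_mul hq_two_mul
      hp_sub hq_add
  choose! κ hκ using hκ
  have hfiber : #G ≤ 4 * 4 * #(G.image κ) := by
    refine card_le_mul_card_image_of_mem (S := fun k => {p ∈ k.primeFactors | d / 16 < p})
      (fun x hx => ?_) fun x hx => ?_
    · obtain ⟨hk, hpk, hqk⟩ := hκ x hx
      simp only [G, Q, P, primesIoc, mem_sigma, mem_filter, mem_Ioc] at hx
      simp only [mem_filter, Nat.mem_primeFactors]
      exact ⟨⟨⟨hx.1.1.2, hqk, hk.1.ne_zero⟩, by omega⟩,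
        ⟨hx.2.1.2, hpk, hk.1.ne_zero⟩, hx.2.1.1.1⟩
    · exact Nat.le_of_lt_succ (card_filter_primeFactors_lt_five_of_mem_charSet hd (hκ x hx).1)
  have himage : #(G.image κ) ≤ (charSet d).ncard := by
    rw [← Set.ncard_coe_finset]
    refine Set.ncard_le_ncard (fun k hk => ?_) (finite_charSet d)
    obtain ⟨x, hx, rfl⟩ := mem_image.1 hk
    exact (hκ x hx).1
  calc (#(primesIoc (d / 4) d) - 1) * (#P - 3) ≤ #Q * (#P - 3) := Nat.mul_le_mul_right _ hQ
    _ ≤ #G := hG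
    _ ≤ 16 * (charSet d).ncard := by omega

lemma eventually_sq_le_ncard_charSet_mul_log_sq :
    ∀ᶠ d : ℕ in atTop, (d : ℝ) ^ 2 ≤ 5120 * (charSet d).ncard * log d ^ 2 := by
  have hlog : ∀ᶠ x : ℝ in atTop, log x ≤ x / 200 := by
    filter_upwards [isLittleO_log_id_atTop.bound (c := 1 / 200) (by norm_num),
      eventually_ge_atTop 0] with x hx hx₀
    rw [id, norm_of_nonneg hx₀] at hx
    linarith [le_norm_self (log x)]
  have hprimes := eventually_le_four_mul_card_primesIoc_mul_log
  filter_upwards [hprimes, (Nat.tendsto_div_const_atTop four_ne_zero).eventually hprimes,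
    tendsto_natCast_atTop_atTop.eventually hlog, eventually_ge_atTop (2 ^ 24)]
    with d hB_log hA_log hlogd hd
  rw [Nat.div_div_eq_div_mul] at hA_log
  have hcount := card_sub_one_mul_card_sub_three_le_ncard_charSet hd
  set A := #(primesIoc (d / 16) (d / 4))
  set B := #(primesIoc (d / 4) d)
  have hd' : (2 : ℝ) ^ 24 ≤ d := mod_cast hd
  have hL : 0 < log d := log_pos (by linarith)
  have hquarter : (d : ℝ) / 5 ≤ (d / 4 : ℕ) := by
    have : (d : ℝ) ≤ 4 * (d / 4 : ℕ) + 3 := mod_cast (by omega : d ≤ 4 * (d / 4) + 3)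
    linarith
  have hlog_quarter : log (d / 4 : ℕ) ≤ log d :=
    log_le_log (by linarith) (mod_cast Nat.div_le_self d 4)
  have hAL : (d : ℝ) / 20 ≤ A * log d := by
    nlinarith [mul_le_mul_of_nonneg_left hlog_quarter (Nat.cast_nonneg A)]
  have hBL : (d : ℝ) / 4 ≤ B * log d := by linarith
  have hA : 6 ≤ A := by
    have : (6 : ℝ) < A := lt_of_mul_lt_mul_right (by nlinarith) hL.le
    exact_mod_cast this.le
  have hB : 2 ≤ B := by
    have : (2 : ℝ) < B := lt_of_mul_lt_mul_right (by nlinarith) hL.le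
    exact_mod_cast this.le
  have hAB : A * B ≤ 64 * (charSet d).ncard :=
    calc A * B ≤ 2 * (A - 3) * (2 * (B - 1)) := Nat.mul_le_mul (by omega) (by omega)
      _ = 4 * ((B - 1) * (A - 3)) := by ring
      _ ≤ 64 * (charSet d).ncard := by omega
  have hAB' : (A : ℝ) * B ≤ 64 * (charSet d).ncard := mod_cast hAB
  nlinarith [mul_le_mul hAL hBL (by positivity) (by positivity)]

/-- The number of distinct characteristics occurring among integral triangles with
diameter `d` is `Ω(d²/(log d)²)`. -/
theorem charSet_card_bigOmega :
    ∃ c : ℝ, 0 < c ∧ ∃ d0 : ℕ, ∀ d : ℕ, d0 ≤ d →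
      c * (d : ℝ) ^ 2 / (Real.log d) ^ 2 ≤ ((charSet d).ncard : ℝ) := by
  obtain ⟨d0, hd0⟩ := eventually_atTop.1 eventually_sq_le_ncard_charSet_mul_log_sq
  refine ⟨1 / 5120, by norm_num, d0, fun d hd =>
    div_le_of_le_mul₀ (by positivity) (by positivity) ?_⟩
  linarith [hd0 d hd]
end

section
/- Let d be a sufficiently large integer and let p1, p2 be odd primes with 9d/4 < p1 < 10d/4 and 5d/4 < p2 < 6d/4. Set a = d, b = (p1+p2)/2 − d, c = (p1−p2)/2. Then a > b > c are positive integers forming a non-degenerate triangle with a+b+c = p1, a+b−c = p2, and the characteristic of this triangle is divisible by p1·p2. -/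
/-!
Since `a + b + c = p₁`, `a + b - c = p₂`, `a - b + c = 2d - p₂` and `-a + b + c = p₁ - 2d`, the
product is `p₁ p₂ (2d - p₂)(p₁ - 2d)`, and the last two factors are positive and smaller than
`p₂ < p₁`. So each `pᵢ` divides the product exactly once; an odd power of a prime cannot be
absorbed by the square `w²`, hence `pᵢ` divides the squarefree part `k`.
-/

theorem Prime.dvd_of_mul_sq_eq_mul_of_not_dvd {α : Type*} [CommMonoidWithZero α]
    [IsCancelMulZero α] {p k w n : α} (hp : Prime p) (h : k * w ^ 2 = p * n) (hn : ¬ p ∣ n) :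
    p ∣ k := by
  by_contra hk
  obtain ⟨m, rfl⟩ : p ∣ w :=
    hp.dvd_of_dvd_pow ((hp.dvd_mul.mp (h ▸ dvd_mul_right p n)).resolve_left hk)
  refine hn ⟨k * m ^ 2, mul_left_cancel₀ hp.ne_zero ?_⟩
  rw [← h, mul_pow, sq p]
  ac_rfl

theorem Int.natCast_prime_not_dvd_mul_of_lt {p q : ℕ} (hp : p.Prime) (hq : q.Prime) (hpq : p ≠ q)
    {x y : ℤ} (hx : 0 < x) (hxp : x < p) (hy : 0 < y) (hyp : y < p) :
    ¬ (p : ℤ) ∣ q * x * y := by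
  have hp' : Prime (p : ℤ) := Nat.prime_iff_prime_int.mp hp
  have not_dvd_of_lt {z : ℤ} (hz : 0 < z) (hzp : z < p) : ¬ (p : ℤ) ∣ z :=
    fun hdvd => (Int.le_of_dvd hz hdvd).not_gt hzp
  refine hp'.not_dvd_mul (hp'.not_dvd_mul ?_ (not_dvd_of_lt hx hxp)) (not_dvd_of_lt hy hyp)
  rw [Int.natCast_dvd_natCast, Nat.prime_dvd_prime_iff_eq hp hq]
  exact hpq

/-- For all sufficiently large `d` and odd primes `p1 ∈ (9d/4, 10d/4)`,
`p2 ∈ (5d/4, 6d/4)`, setting `a = d`, `b = (p1+p2)/2 − d`, `c = (p1−p2)/2` gives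
positive integers `a > b > c` forming a non-degenerate triangle with `a+b+c = p1`,
`a+b−c = p2`, whose characteristic (squarefree part of
`(a+b+c)(a+b-c)(a-b+c)(-a+b+c)`) is divisible by `p1·p2`. -/
theorem prime_pair_triangle_char_divisible :
    ∃ d0 : ℕ, ∀ d : ℕ, d0 ≤ d → ∀ p1 p2 : ℕ, p1.Prime → p2.Prime → Odd p1 → Odd p2 →
      9 * d < 4 * p1 → 4 * p1 < 10 * d → 5 * d < 4 * p2 → 4 * p2 < 6 * d →
      ∀ b c : ℤ, 2 * b = (p1 : ℤ) + p2 - 2 * d → 2 * c = (p1 : ℤ) - p2 →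
        (0 < c ∧ c < b ∧ b < (d : ℤ)) ∧ (d : ℤ) < b + c ∧
        (d : ℤ) + b + c = p1 ∧ (d : ℤ) + b - c = p2 ∧
        (∀ k w : ℕ, Squarefree k → 0 < w →
          ((d : ℤ) + b + c) * ((d : ℤ) + b - c) * ((d : ℤ) - b + c) * (-(d : ℤ) + b + c)
            = (k : ℤ) * (w : ℤ) ^ 2 → p1 * p2 ∣ k) := by
  refine ⟨0, fun d _ p1 p2 hp1 hp2 _ _ h1 h2 h3 h4 b c hb hc => ?_⟩
  have hp21 : p2 < p1 := by omega
  refine ⟨⟨by omega, by omega, by omega⟩, by omega, by omega, by omega, fun k w _ _ heq => ?_⟩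
  rw [show (d : ℤ) + b + c = p1 by omega, show (d : ℤ) + b - c = p2 by omega,
    show (d : ℤ) - b + c = 2 * d - p2 by omega, show -(d : ℤ) + b + c = p1 - 2 * d by omega] at heq
  have hk1 : p1 ∣ k := by
    rw [← Int.natCast_dvd_natCast]
    exact (Nat.prime_iff_prime_int.mp hp1).dvd_of_mul_sq_eq_mul_of_not_dvd
      (n := p2 * (2 * d - p2) * (p1 - 2 * d)) (by rw [← heq]; ring)
      (Int.natCast_prime_not_dvd_mul_of_lt hp1 hp2 hp21.ne'
        (by omega) (by omega) (by omega) (by omega))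
  have hk2 : p2 ∣ k := by
    rw [← Int.natCast_dvd_natCast]
    exact (Nat.prime_iff_prime_int.mp hp2).dvd_of_mul_sq_eq_mul_of_not_dvd
      (n := p1 * (2 * d - p2) * (p1 - 2 * d)) (by rw [← heq]; ring)
      (Int.natCast_prime_not_dvd_mul_of_lt hp2 hp1 hp21.ne
        (by omega) (by omega) (by omega) (by omega))
  exact Nat.Coprime.mul_dvd_of_dvd_of_dvd ((Nat.coprime_primes hp1 hp2).mpr hp21.ne') hk1 hk2
end

section
/- Let a triangle ABC have integer side lengths with AB = a the largest side, b = |AC| and c = |BC|, and let P be a point on segment AB with |AP|, |PB| and |PC| integers. Let h be the distance from C to line AB, let q be the signed distance from the foot of the altitude from C to P, and let g = 2a/gcd(b²−c²+a², 2a). Then g·q is an integer and (g·|PC| + g·q)(g·|PC| − g·q) = D, where D = (a+b+c)(a+b−c)(a−b+c)(−a+b+c)/gcd(b²−c²+a², 2a)² is the decomposition number; in particular, each such point P yields a factorization of D into two factors. -/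
/-- Decomposition lemma (single point version): let `ABC` be a non-degenerate triangle
with integer sides `a = |AB|` (the largest side), `b = |CA|`, `c = |CB|`, and let `P`
be a point on segment `AB` with integer distances `|AP|`, `|PB|`, `|PC|`.
With `G = gcd(b²−c²+a², 2a)`, `g = 2a/G`, and `q = |AP| − (b²−c²+a²)/(2a)` the signed
distance from the foot of the altitude from `C` to `P`, the number `g·q` is an integer
and `(g·|PC| + g·q)(g·|PC| − g·q) = D`, where `D` is the decomposition number
`(a+b+c)(a+b−c)(a−b+c)(−a+b+c)/G²` (an integer). -/
theorem decomposition_lemma_point (A B C P : EuclideanSpace ℝ (Fin 2))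
    (a b c : ℕ) (hab : dist A B = a) (hca : dist C A = b) (hcb : dist C B = c)
    (hba : b ≤ a) (hcba : c ≤ a)
    (hnc : ¬ Collinear ℝ ({A, B, C} : Set (EuclideanSpace ℝ (Fin 2))))
    (hP : P ∈ segment ℝ A B)
    (r s t : ℕ) (hAP : dist A P = r) (hPB : dist P B = s) (hPC : dist P C = t) :
    ∀ G g : ℕ, G = Nat.gcd (b ^ 2 + a ^ 2 - c ^ 2) (2 * a) → g * G = 2 * a →
      ∀ qr : ℝ, qr = dist A P - ((b : ℝ) ^ 2 - (c : ℝ) ^ 2 + (a : ℝ) ^ 2) / (2 * a) →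
        (∃ m : ℤ, (g : ℝ) * qr = (m : ℝ)) ∧
        ∃ D : ℤ, D * (G : ℤ) ^ 2 =
            ((a : ℤ) + b + c) * ((a : ℤ) + b - c) * ((a : ℤ) - b + c) * (-(a : ℤ) + b + c) ∧
          ((g : ℝ) * t + (g : ℝ) * qr) * ((g : ℝ) * t - (g : ℝ) * qr) = (D : ℝ) := by
  intro G g hG hgG qr hqr
  -- nondegeneracy
  have hAB : A ≠ B := by
    rintro rfl
    apply hnc
    have : ({A, A, C} : Set (EuclideanSpace ℝ (Fin 2))) = {A, C} := by
      simp
    rw [this]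
    exact collinear_pair ℝ A C
  have hapos : (0:ℝ) < (a:ℝ) := by rw [← hab]; exact dist_pos.2 hAB
  have ha0 : (a:ℝ) ≠ 0 := ne_of_gt hapos
  have haN : a ≠ 0 := Nat.cast_ne_zero.mp ha0
  -- inner product / law of cosines
  set I : ℝ := (inner ℝ (C - A) (B - A) : ℝ) with hIdef
  have hI : 2 * I = (b:ℝ)^2 + (a:ℝ)^2 - (c:ℝ)^2 := by
    have hc' : (c:ℝ)^2 = ‖(C - A) - (B - A)‖^2 := by
      rw [← hcb, dist_eq_norm]; congr 1; abel
    rw [norm_sub_sq_real] at hc'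
    have hb' : ‖C - A‖ = (b:ℝ) := by rw [← hca, dist_eq_norm]
    have ha' : ‖B - A‖ = (a:ℝ) := by rw [← hab, dist_eq_norm']
    rw [hb', ha'] at hc'
    linarith
  -- P on segment
  obtain ⟨u, v, hu, hv, huv, hPuv⟩ := hP
  have hPA : P - A = v • (B - A) := by
    rw [← hPuv]
    have hu1 : u = 1 - v := by linarith
    rw [hu1]
    module
  have hr : (r:ℝ) = v * (a:ℝ) := by
    rw [← hAP, dist_eq_norm', hPA, norm_smul, Real.norm_eq_abs, abs_of_nonneg hv,
      ← hab, dist_eq_norm']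
  have hIP : (inner ℝ (C - A) (P - A) : ℝ) = v * I := by
    rw [hPA, real_inner_smul_right]
  have ht : (t:ℝ)^2 = (b:ℝ)^2 - 2 * (v * I) + (r:ℝ)^2 := by
    have : (t:ℝ)^2 = ‖(C - A) - (P - A)‖^2 := by
      rw [← hPC, dist_eq_norm']; congr 2; abel
    rw [norm_sub_sq_real, hIP] at this
    have hb' : ‖C - A‖ = (b:ℝ) := by rw [← hca, dist_eq_norm]
    have hr' : ‖P - A‖ = (r:ℝ) := by rw [← hAP, dist_eq_norm']
    rw [hb', hr'] at this
    linarith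
  set p : ℝ := ((b:ℝ)^2 - (c:ℝ)^2 + (a:ℝ)^2) / (2 * a) with hpdef
  have h2ap : 2 * (a:ℝ) * p = (b:ℝ)^2 - (c:ℝ)^2 + (a:ℝ)^2 := by
    rw [hpdef]; field_simp
  have hvI : v * I = (r:ℝ) * p := by
    have : 2 * (a:ℝ) * (v * I) = 2 * (a:ℝ) * ((r:ℝ) * p) := by
      calc 2 * (a:ℝ) * (v * I) = v * (a:ℝ) * (2 * I) := by ring
        _ = (r:ℝ) * ((b:ℝ)^2 + (a:ℝ)^2 - (c:ℝ)^2) := by rw [← hr, hI]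
        _ = 2 * (a:ℝ) * ((r:ℝ) * p) := by
            rw [show 2*(a:ℝ)*((r:ℝ)*p) = (r:ℝ)*(2*a*p) by ring, h2ap]; ring
    have h2a : (2 * (a:ℝ)) ≠ 0 := by positivity
    exact mul_left_cancel₀ h2a this
  have hqr : qr = (r:ℝ) - p := by rw [hqr, hAP]
  have hkey : (t:ℝ)^2 - qr^2 = (b:ℝ)^2 - p^2 := by
    rw [ht, hvI, hqr]; ring
  -- arithmetic
  set N : ℕ := b ^ 2 + a ^ 2 - c ^ 2 with hNdef
  have hc2 : c ^ 2 ≤ b ^ 2 + a ^ 2 := le_trans (Nat.pow_le_pow_left hcba 2) (Nat.le_add_left _ _)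
  have hNR : (N:ℝ) = (b:ℝ)^2 + (a:ℝ)^2 - (c:ℝ)^2 := by
    have := Nat.cast_sub (R := ℝ) hc2
    push_cast at this ⊢
    rw [hNdef]; push_cast [this]; ring
  have hNZ : (N:ℤ) = (b:ℤ)^2 + (a:ℤ)^2 - (c:ℤ)^2 := by
    have := Nat.cast_sub (R := ℤ) hc2
    rw [hNdef]; push_cast [this]; ring
  have hGdvd : G ∣ N := hG ▸ Nat.gcd_dvd_left _ _
  set k : ℕ := N / G with hkdef
  have hG0 : G ≠ 0 := by
    intro h
    rw [h, mul_zero] at hgG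
    omega
  have hk : G * k = N := Nat.mul_div_cancel' hGdvd
  have hgGR : (g:ℝ) * G = 2 * (a:ℝ) := by exact_mod_cast hgG
  have hkR : (G:ℝ) * k = (N:ℝ) := by exact_mod_cast hk
  have hGR0 : (G:ℝ) ≠ 0 := Nat.cast_ne_zero.2 hG0
  have hgp : (g:ℝ) * p = (k:ℝ) := by
    have h1 : ((g:ℝ) * p) * G = (k:ℝ) * G := by
      calc ((g:ℝ) * p) * G = p * ((g:ℝ) * G) := by ring
        _ = p * (2 * a) := by rw [hgGR]
        _ = (N:ℝ) := by rw [hNR]; linarith [h2ap]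
        _ = (k:ℝ) * G := by rw [← hkR]; ring
    exact mul_right_cancel₀ hGR0 h1
  constructor
  · exact ⟨(g:ℤ) * r - k, by rw [hqr]; push_cast; linear_combination (-1:ℝ) * hgp⟩
  · refine ⟨(g:ℤ)^2 * b^2 - (k:ℤ)^2, ?_, ?_⟩
    · have hgGZ : (g:ℤ) * G = 2 * (a:ℤ) := by exact_mod_cast hgG
      have hkZ : (G:ℤ) * k = (N:ℤ) := by exact_mod_cast hk
      have h4 : ((g:ℤ)^2 * b^2 - (k:ℤ)^2) * (G:ℤ)^2 = 4*(a:ℤ)^2*(b:ℤ)^2 - (N:ℤ)^2 := by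
        have h1 : ((g:ℤ)*G)^2 = (2*(a:ℤ))^2 := by rw [hgGZ]
        have h2 : ((G:ℤ)*k)^2 = (N:ℤ)^2 := by rw [hkZ]
        linear_combination (b:ℤ)^2 * h1 - h2
      rw [h4, hNZ]; ring
    · push_cast
      linear_combination (g:ℝ)^2 * hkey - ((g:ℝ)*p + (k:ℝ)) * hgp
end

section
/- For a plane integral point set P of n points in which at least m of the points are collinear (and one point C lies off that line), the number of collinear points m satisfies m ≤ τ(D) up to a constant factor, where D is the decomposition number of the largest triangle of P; consequently the number of divisors of D is at least m/2. -/
/-!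
Let `X` be one of the collinear points, with `q = |AX|` and `r = |CX|` integers. Stewart's theorem
in the triangle `ABC` gives `4a²r² = (2aq - k)² + H` with `k = b² + a² - c²` and
`H = (a+b+c)(a+b-c)(a-b+c)(-a+b+c) = 4a²b² - k²`. Hence
`(2ar + 2aq - k)(2ar - 2aq + k) = H = D g²`, where `g = gcd(k, 2a)` divides both factors, so
dividing each by `g` factors `D` as `u v` with `u > 0`. As `u - v = 2(2aq - k)/g`, the divisor `u`
determines `q` and hence `X`, so distinct points give distinct divisors of `D`.
-/

/-- Sixteen times the squared area of a triangle with sides `a`, `b`, `c`. -/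
def heronProduct (a b c : ℤ) : ℤ := (a + b + c) * (a + b - c) * (a - b + c) * (-a + b + c)

theorem heronProduct_eq (a b c : ℤ) :
    heronProduct a b c = 4 * a ^ 2 * b ^ 2 - (b ^ 2 + a ^ 2 - c ^ 2) ^ 2 := by
  unfold heronProduct; ring

theorem heronProduct_pos {a b c : ℤ} (ha : a < b + c) (hb : b < a + c) (hc : c < a + b) :
    0 < heronProduct a b c := by
  unfold heronProduct
  have : 0 < a + b + c := by linarith
  have : 0 < a + b - c := by linarith
  have : 0 < a - b + c := by linarith
  have : 0 < -a + b + c := by linarith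
  positivity

theorem sq_dvd_heronProduct {a b c g : ℤ} (h2a : g ∣ 2 * a) (hk : g ∣ b ^ 2 + a ^ 2 - c ^ 2) :
    g ^ 2 ∣ heronProduct a b c := by
  rw [heronProduct_eq, sq g, show 4 * a ^ 2 * b ^ 2 - (b ^ 2 + a ^ 2 - c ^ 2) ^ 2 =
    (2 * a * b - (b ^ 2 + a ^ 2 - c ^ 2)) * (2 * a * b + (b ^ 2 + a ^ 2 - c ^ 2)) by ring]
  exact mul_dvd_mul (dvd_sub (h2a.mul_right b) hk) (dvd_add (h2a.mul_right b) hk)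

theorem exists_mem_divisors_of_sq_eq_sq_add {a k q r : ℤ} {g D : ℕ} (h2a : (g : ℤ) ∣ 2 * a)
    (hk : (g : ℤ) ∣ k) (ha : 0 < a) (hr : 0 < r) (hD : 0 < D)
    (h : 4 * a ^ 2 * r ^ 2 = (2 * a * q - k) ^ 2 + D * g ^ 2) :
    ∃ u ∈ D.divisors, 4 * a * q = g * ((u : ℤ) - (D / u : ℕ)) + 2 * k := by
  have hg : (0 : ℤ) < g := by
    have : g ≠ 0 := by rintro rfl; rw [Nat.cast_zero, zero_dvd_iff] at h2a; omega
    positivity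
  obtain ⟨u, hu⟩ : (g : ℤ) ∣ 2 * a * r + (2 * a * q - k) :=
    dvd_add (h2a.mul_right r) (dvd_sub (h2a.mul_right q) hk)
  obtain ⟨v, hv⟩ : (g : ℤ) ∣ 2 * a * r - (2 * a * q - k) :=
    dvd_sub (h2a.mul_right r) (dvd_sub (h2a.mul_right q) hk)
  have huv : u * v = D := by
    refine mul_left_cancel₀ (pow_ne_zero 2 hg.ne') ?_
    rw [show (g : ℤ) ^ 2 * (u * v) = (g * u) * (g * v) by ring, ← hu, ← hv]
    linear_combination h
  have hsum : (g : ℤ) * (u + v) = 4 * a * r := by linear_combination -hu - hv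
  have hu0 : 0 < u := by
    have : 0 < u + v := pos_of_mul_pos_right (hsum ▸ by positivity) hg.le
    nlinarith [show (0 : ℤ) < u * v by rw [huv]; exact_mod_cast hD]
  lift u to ℕ using hu0.le
  have hv0 : 0 ≤ v := by nlinarith [show (0 : ℤ) < u * v by rw [huv]; exact_mod_cast hD]
  lift v to ℕ using hv0
  have huvD : u * v = D := by exact_mod_cast huv
  refine ⟨u, Nat.mem_divisors.2 ⟨⟨v, huvD.symm⟩, hD.ne'⟩, ?_⟩
  rw [← huvD, Nat.mul_div_cancel_left v (Nat.pos_of_mul_pos_right (huvD ▸ hD))]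
  linear_combination hu - hv

theorem collinear_of_subset_segment {𝕜 E : Type*} [Field 𝕜] [LinearOrder 𝕜] [IsStrictOrderedRing 𝕜]
    [AddCommGroup E] [Module 𝕜 E] {s : Set E} {x y : E} (h : s ⊆ segment 𝕜 x y) :
    Collinear 𝕜 s := by
  refine (collinear_iff_exists_forall_eq_smul_vadd s).2 ⟨x, y - x, fun p hp => ?_⟩
  obtain ⟨t, -, rfl⟩ := segment_eq_image' 𝕜 x y ▸ h hp
  exact ⟨t, by rw [vadd_eq_add, add_comm]⟩

section Wbtw

variable {V P : Type*} [NormedAddCommGroup V] [NormedSpace ℝ V] [MetricSpace P]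
  [NormedAddTorsor V P]

theorem Wbtw.eq_of_dist_left_eq {x y y' z : P} (h : Wbtw ℝ x y z) (h' : Wbtw ℝ x y' z)
    (hd : dist x y = dist x y') : y = y' := by
  obtain ⟨t, ⟨ht, -⟩, rfl⟩ := h
  obtain ⟨s, ⟨hs, -⟩, rfl⟩ := h'
  rcases eq_or_ne x z with rfl | hxz
  · simp
  rw [dist_left_lineMap, dist_left_lineMap, Real.norm_of_nonneg ht, Real.norm_of_nonneg hs] at hd
  rw [mul_right_cancel₀ (dist_ne_zero.2 hxz) hd]

end Wbtw

section Euclidean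

variable {V P : Type*} [NormedAddCommGroup V] [InnerProductSpace ℝ V] [MetricSpace P]
  [NormedAddTorsor V P]

theorem dist_sq_mul_dist_add_dist_sq_mul_dist_of_wbtw (a : P) {b c p : P} (h : Wbtw ℝ b p c) :
    dist a b ^ 2 * dist c p + dist a c ^ 2 * dist b p =
      dist b c * (dist a p ^ 2 + dist b p * dist c p) := by
  rcases eq_or_ne p b with rfl | hpb
  · simp [dist_comm c]; ring
  rcases eq_or_ne p c with rfl | hpc
  · simp [dist_comm b]; ring
  exact EuclideanGeometry.dist_sq_mul_dist_add_dist_sq_mul_dist a b c p (Sbtw.angle₁₂₃_eq_pi ⟨h, hpb, hpc⟩)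

theorem pos_and_heronProduct_pos_of_not_wbtw {A B C : P} {a b c : ℕ} (hC : ¬ Wbtw ℝ A C B)
    (hAB : dist A B = a) (hCA : dist C A = b) (hCB : dist C B = c) (hba : b ≤ a) (hcb : c ≤ b) :
    0 < a ∧ 0 < heronProduct a b c := by
  have ha : 0 < a := by
    by_contra! ha
    have hCA' : C = A := dist_eq_zero.1 (by rw [hCA]; exact_mod_cast (by omega : b = 0))
    exact hC (hCA' ▸ wbtw_self_left ℝ A B)
  have hc : 0 < c := by
    by_contra! hc
    have hCB' : C = B := dist_eq_zero.1 (by rw [hCB]; exact_mod_cast (by omega : c = 0))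
    exact hC (hCB' ▸ wbtw_self_right ℝ A B)
  have htri : a < b + c := by
    have := dist_lt_dist_add_dist_iff.2 hC
    rw [hAB, dist_comm A C, hCA, hCB] at this
    exact_mod_cast this
  exact ⟨ha, heronProduct_pos (by omega) (by omega) (by omega)⟩

theorem four_mul_sq_mul_sq_eq_sq_add_heronProduct {A B C X : P} {a b c q r : ℕ}
    (hX : Wbtw ℝ A X B) (hAB : dist A B = a) (hCA : dist C A = b) (hCB : dist C B = c)
    (hAX : dist A X = q) (hCX : dist C X = r) :
    4 * (a : ℤ) ^ 2 * r ^ 2 = (2 * a * q - (b ^ 2 + a ^ 2 - c ^ 2)) ^ 2 + heronProduct a b c := by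
  have hBX : dist B X = a - q := by linarith [hX.dist_add_dist, dist_comm B X]
  have h := dist_sq_mul_dist_add_dist_sq_mul_dist_of_wbtw C hX
  rw [hAB, hCA, hCB, hAX, hCX, hBX] at h
  rw [heronProduct_eq]
  have : 4 * (a : ℝ) ^ 2 * r ^ 2 = (2 * a * q - (b ^ 2 + a ^ 2 - c ^ 2)) ^ 2
      + (4 * a ^ 2 * b ^ 2 - (b ^ 2 + a ^ 2 - c ^ 2) ^ 2) := by
    linear_combination -4 * (a : ℝ) * h
  exact_mod_cast this

theorem exists_mem_divisors_of_wbtw {A B C X : P} {a b c g D : ℕ} (hX : Wbtw ℝ A X B)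
    (hne : C ≠ X) (hAX : ∃ q : ℕ, dist A X = q) (hCX : ∃ r : ℕ, dist C X = r)
    (hAB : dist A B = a) (hCA : dist C A = b) (hCB : dist C B = c) (ha : 0 < a) (hD : 0 < D)
    (h2a : (g : ℤ) ∣ 2 * a) (hk : (g : ℤ) ∣ b ^ 2 + a ^ 2 - c ^ 2)
    (hDg : (D : ℤ) * g ^ 2 = heronProduct a b c) :
    ∃ u ∈ D.divisors,
      4 * a * dist A X = g * ((u : ℝ) - (D / u : ℕ)) + 2 * ((b : ℝ) ^ 2 + a ^ 2 - c ^ 2) := by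
  obtain ⟨q, hq⟩ := hAX
  obtain ⟨r, hr⟩ := hCX
  have hr0 : (0 : ℤ) < r := by exact_mod_cast hr ▸ dist_pos.2 hne
  obtain ⟨u, hu, hqu⟩ := exists_mem_divisors_of_sq_eq_sq_add h2a hk (by exact_mod_cast ha) hr0 hD
    (hDg ▸ four_mul_sq_mul_sq_eq_sq_add_heronProduct hX hAB hCA hCB hq hr)
  exact ⟨u, hu, by rw [hq]; exact_mod_cast hqu⟩

end Euclidean

theorem collinear_points_le_two_tau_decomposition_general
    (S : Set (EuclideanSpace ℝ (Fin 2)))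
    (hint : ∀ p ∈ S, ∀ q ∈ S, ∃ n : ℕ, dist p q = n)
    (T : Set (EuclideanSpace ℝ (Fin 2))) (hTS : T ⊆ S)
    (m : ℕ) (hm : T.ncard = m)
    (C A B : EuclideanSpace ℝ (Fin 2)) (hC : C ∈ S) (hA : A ∈ T)
    (hCoff : ¬ Collinear ℝ (T ∪ {C}))
    (hseg : ∀ X ∈ T, X ∈ segment ℝ A B)
    (a b c : ℕ) (hab : dist A B = a) (hca : dist C A = b) (hcb : dist C B = c)
    (hba : b ≤ a) (hcba : c ≤ b) :
    ∃ D : ℕ, (D : ℤ) * (Nat.gcd (b ^ 2 + a ^ 2 - c ^ 2) (2 * a) : ℤ) ^ 2 =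
        ((a : ℤ) + b + c) * ((a : ℤ) + b - c) * ((a : ℤ) - b + c) * (-(a : ℤ) + b + c) ∧
      m ≤ 2 * D.divisors.card := by
  have hT : ∀ X ∈ T, Wbtw ℝ A X B := fun X hX => mem_segment_iff_wbtw.1 (hseg X hX)
  have hCAB : ¬ Wbtw ℝ A C B := fun h => hCoff <| collinear_of_subset_segment <|
    Set.union_subset hseg (Set.singleton_subset_iff.2 h.mem_segment)
  obtain ⟨ha, hR⟩ := pos_and_heronProduct_pos_of_not_wbtw hCAB hab hca hcb hba hcba
  set g := Nat.gcd (b ^ 2 + a ^ 2 - c ^ 2) (2 * a)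
  have hgk : (g : ℤ) ∣ b ^ 2 + a ^ 2 - c ^ 2 := by
    have := Int.natCast_dvd_natCast.2 (Nat.gcd_dvd_left (b ^ 2 + a ^ 2 - c ^ 2) (2 * a))
    rwa [Nat.cast_sub (by nlinarith), Nat.cast_add, Nat.cast_pow, Nat.cast_pow, Nat.cast_pow] at this
  have hg2a : (g : ℤ) ∣ 2 * a := by exact_mod_cast Nat.gcd_dvd_right (b ^ 2 + a ^ 2 - c ^ 2) (2 * a)
  obtain ⟨D, hD⟩ : ∃ D : ℕ, (D : ℤ) * g ^ 2 = heronProduct a b c := by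
    obtain ⟨D, hD⟩ := sq_dvd_heronProduct hg2a hgk
    lift D to ℕ using nonneg_of_mul_nonneg_right (hD ▸ hR.le) (by positivity)
    exact ⟨D, by rw [hD, mul_comm]⟩
  have hD0 : 0 < D := by exact_mod_cast pos_of_mul_pos_left (hD ▸ hR) (by positivity)
  refine ⟨D, hD, ?_⟩
  choose! u hu hdist using fun X hX => exists_mem_divisors_of_wbtw (hT X hX)
    (by rintro rfl; exact hCAB (hT C hX)) (hint A (hTS hA) X (hTS hX)) (hint C hC X (hTS hX))
    hab hca hcb ha hD0 hg2a hgk hD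
  have hinj : Set.InjOn u T := fun X hX Y hY huXY => (hT X hX).eq_of_dist_left_eq (hT Y hY) <| by
    have h := hdist X hX
    rw [huXY, ← hdist Y hY] at h
    exact mul_left_cancel₀ (mul_pos four_pos (Nat.cast_pos.2 ha)).ne' h
  calc m = T.ncard := hm.symm
    _ ≤ (D.divisors : Set ℕ).ncard := Set.ncard_le_ncard_of_injOn u hu hinj D.divisors.finite_toSet
    _ = D.divisors.card := Set.ncard_coe_finset _
    _ ≤ 2 * D.divisors.card := Nat.le_mul_of_pos_left _ two_pos

/-- For a plane integral point set with `m` collinear points (on the segment between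
collinear points `A` and `B`) and a point `C` off the line, the number of divisors of
the decomposition number `D = (a+b+c)(a+b-c)(a-b+c)(-a+b+c)/gcd(b²−c²+a², 2a)²`
of the largest triangle `ABC` is at least `m/2`, i.e. `m ≤ 2·τ(D)`. -/
theorem collinear_points_le_two_tau_decomposition
    (S : Set (EuclideanSpace ℝ (Fin 2))) (hfin : S.Finite)
    (hint : ∀ p ∈ S, ∀ q ∈ S, ∃ n : ℕ, dist p q = n)
    (T : Set (EuclideanSpace ℝ (Fin 2))) (hTS : T ⊆ S) (hcol : Collinear ℝ T)
    (m : ℕ) (hm : T.ncard = m)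
    (C A B : EuclideanSpace ℝ (Fin 2)) (hC : C ∈ S) (hA : A ∈ T) (hB : B ∈ T)
    (hCoff : ¬ Collinear ℝ (T ∪ {C}))
    (hseg : ∀ X ∈ T, X ∈ segment ℝ A B)
    (a b c : ℕ) (hab : dist A B = a) (hca : dist C A = b) (hcb : dist C B = c)
    (hba : b ≤ a) (hcba : c ≤ b) :
    ∃ D : ℕ, (D : ℤ) * (Nat.gcd (b ^ 2 + a ^ 2 - c ^ 2) (2 * a) : ℤ) ^ 2 =
        ((a : ℤ) + b + c) * ((a : ℤ) + b - c) * ((a : ℤ) - b + c) * (-(a : ℤ) + b + c) ∧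
      m ≤ 2 * D.divisors.card :=
  collinear_points_le_two_tau_decomposition_general S hint T hTS m hm C A B hC hA hCoff hseg a b c
    hab hca hcb hba hcba
end

section
/- Fix δ > 0 and ε > 0. There exists n₀ such that for all n ≥ n₀, every plane integral point set P of n points containing at least n^δ collinear points has diameter at least n^(δ·log log n / (4·log 2·(1+ε))). -/
/-!
Let `q ∈ S` lie off the line of the collinear set `T`, and give the points of `T` integer
coordinates `z` along that line. Multiplying the law of cosines by `4m²`, where `m` is the length
of a segment of `T`, turns the integer distances `A = dist q p` (`p ∈ T`) into factorizations
`(2mA)² - (2mz - u)² = N` of a single integer `0 < N ≤ 4·diam⁴` (sixteen times the squared area of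
a triangle of `S`); distinct points give distinct factorizations, so `n^δ ≤ #T ≤ τ(N)`.
Splitting the prime factors of `N` at `y ≈ log x / (log log x)²` gives
`τ(N) ≤ 2^((1 + o(1)) log x / log log x)` for `N ≤ x`, which for a diameter below the claimed
bound is smaller than `n^δ` once `n` is large.
-/

open Real Finset Filter Asymptotics RealInnerProductSpace

theorem sum_factorization_mul_log_le {N : ℕ} {A : Finset ℕ} (hA : A ⊆ N.primeFactors) :
    ∑ p ∈ A, (N.factorization p : ℝ) * log p ≤ log N := by
  rw [Real.log_nat_eq_sum_factorization, Finsupp.sum, Nat.support_factorization]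
  refine sum_le_sum_of_subset_of_nonneg hA fun p hp _ => ?_
  have : (1 : ℝ) ≤ p := mod_cast (Nat.prime_of_mem_primeFactors hp).one_le
  positivity

theorem factorization_succ_le_of_log_le {N : ℕ} {X : ℝ} (hX : log N ≤ X) {p : ℕ}
    (hp : p ∈ N.primeFactors) : (N.factorization p : ℝ) + 1 ≤ 1 + X / log 2 := by
  have h2p : log 2 ≤ log p :=
    log_le_log two_pos (mod_cast (Nat.prime_of_mem_primeFactors hp).two_le)
  have hsingle := sum_factorization_mul_log_le (singleton_subset_iff.2 hp)
  rw [sum_singleton] at hsingle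
  rw [add_comm, add_le_add_iff_left, le_div_iff₀ (log_pos one_lt_two)]
  nlinarith [(N.factorization p).cast_nonneg (α := ℝ)]

theorem prod_factorization_succ_le_of_le {N : ℕ} {X y : ℝ} (hX : log N ≤ X) (hy : 0 ≤ y) :
    ∏ p ∈ N.primeFactors.filter (fun p : ℕ => (p : ℝ) ≤ y), ((N.factorization p : ℝ) + 1) ≤
      (1 + X / log 2) ^ y := by
  set small := N.primeFactors.filter (fun p : ℕ => (p : ℝ) ≤ y)
  have hcard : (small.card : ℝ) ≤ y := by
    have hsub : small ⊆ Icc 1 ⌊y⌋₊ := fun p hp => by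
      rw [mem_filter] at hp
      exact mem_Icc.2 ⟨(Nat.prime_of_mem_primeFactors hp.1).one_le, Nat.le_floor hp.2⟩
    calc (small.card : ℝ) ≤ (Icc 1 ⌊y⌋₊).card := mod_cast card_le_card hsub
      _ ≤ y := by simpa using Nat.floor_le hy
  have hbase : 1 ≤ 1 + X / log 2 :=
    le_add_of_nonneg_right (div_nonneg ((log_natCast_nonneg N).trans hX) (log_nonneg one_le_two))
  calc _ ≤ ∏ _p ∈ small, (1 + X / log 2) :=
        prod_le_prod (fun _ _ => by positivity)
          fun p hp => factorization_succ_le_of_log_le hX (mem_filter.1 hp).1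
    _ = (1 + X / log 2) ^ (small.card : ℝ) := by rw [prod_const, rpow_natCast]
    _ ≤ (1 + X / log 2) ^ y := rpow_le_rpow_of_exponent_le hbase hcard

theorem prod_factorization_succ_le_of_gt {N : ℕ} {X y : ℝ} (hX : log N ≤ X) (hy : 1 < y) :
    ∏ p ∈ N.primeFactors.filter (fun p : ℕ => ¬ (p : ℝ) ≤ y), ((N.factorization p : ℝ) + 1) ≤
      2 ^ (X / log y) := by
  set large := N.primeFactors.filter (fun p : ℕ => ¬ (p : ℝ) ≤ y)
  have hlogy : 0 < log y := log_pos hy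
  have hsum : (∑ p ∈ large, N.factorization p : ℕ) * log y ≤ X := by
    push_cast
    rw [sum_mul]
    calc ∑ p ∈ large, (N.factorization p : ℝ) * log y
        ≤ ∑ p ∈ large, (N.factorization p : ℝ) * log p := by
          refine sum_le_sum fun p hp => ?_
          have hyp : y < p := not_le.1 (mem_filter.1 hp).2
          gcongr
      _ ≤ log N := sum_factorization_mul_log_le (filter_subset _ _)
      _ ≤ X := hX
  calc _ ≤ ∏ p ∈ large, (2 : ℝ) ^ N.factorization p :=
        prod_le_prod (fun _ _ => by positivity)
          fun p _ => mod_cast Nat.lt_two_pow_self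
    _ = (2 : ℝ) ^ ((∑ p ∈ large, N.factorization p : ℕ) : ℝ) := by
        rw [prod_pow_eq_pow_sum, rpow_natCast]
    _ ≤ 2 ^ (X / log y) :=
        rpow_le_rpow_of_exponent_le one_le_two ((le_div_iff₀ hlogy).2 hsum)

theorem card_divisors_le_two_rpow_mul_rpow {N : ℕ} (hN : N ≠ 0) {X y : ℝ} (hX : log N ≤ X)
    (hy : 1 < y) : (N.divisors.card : ℝ) ≤ 2 ^ (X / log y) * (1 + X / log 2) ^ y := by
  rw [Nat.card_divisors hN, Nat.cast_prod,
    ← prod_filter_not_mul_prod_filter _ (fun p : ℕ => (p : ℝ) ≤ y)]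
  push_cast
  exact mul_le_mul (prod_factorization_succ_le_of_gt hX hy)
    (prod_factorization_succ_le_of_le hX (by linarith)) (by positivity) (by positivity)

theorem eventually_le_mul_of_isLittleO {f : ℝ → ℝ} (hf : f =o[atTop] id) {a : ℝ} (ha : 0 < a) :
    ∀ᶠ x in atTop, f x ≤ a * x := by
  filter_upwards [hf.bound ha, eventually_ge_atTop 0] with x hfx hx
  rw [Real.norm_eq_abs, id, Real.norm_of_nonneg hx] at hfx
  exact (le_abs_self _).trans hfx

theorem eventually_card_divisors_le {a : ℝ} (ha : 1 < a) :
    ∀ᶠ X in atTop, ∀ N : ℕ, (N : ℝ) ≤ exp X → (N.divisors.card : ℝ) ≤ 2 ^ (a * X / log X) := by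
  set a₁ := (1 + a) / 2 with ha₁_def
  set a₂ := (a - 1) / 2 with ha₂_def
  have ha₁ : 1 < a₁ := by linarith
  have ha₂ : 0 < a₂ := by linarith
  have hlog2 := log_two_gt_d9
  set c := a₂ * log 2 / 2
  have hc : 0 < c := by positivity
  have hsq : ∀ᶠ X in atTop, log X ^ 2 ≤ c / 2 * X :=
    eventually_le_mul_of_isLittleO isLittleO_pow_log_id_atTop (by positivity)
  have hloglog : ∀ᶠ X in atTop, 2 * log (log X) - log c ≤ (1 - 1 / a₁) * log X :=
    tendsto_log_atTop.eventually <| eventually_le_mul_of_isLittleO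
      ((isLittleO_log_id_atTop.const_mul_left 2).sub (isLittleO_const_id_atTop _))
      (by simpa using inv_lt_one_of_one_lt₀ ha₁)
  filter_upwards [eventually_ge_atTop 3, hsq, hloglog] with X hX hsqX hllX N hN
  rcases eq_or_ne N 0 with rfl | hN0
  · simp only [Nat.divisors_zero, card_empty, Nat.cast_zero]
    positivity
  have hlogN : log N ≤ X := (log_le_iff_le_exp (by positivity)).2 hN
  have hlogX : 1 ≤ log X := by
    rw [le_log_iff_exp_le (by linarith)]
    linarith [exp_one_lt_d9]
  set y := c * X / log X ^ 2
  have hy : 2 ≤ y := by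
    rw [le_div_iff₀ (by positivity)]
    linarith
  have hlogy : log X / a₁ ≤ log y := by
    have : log y = log c + log X - 2 * log (log X) := by
      rw [log_div (by positivity) (by positivity), log_mul hc.ne' (by positivity), log_pow]
      push_cast
      ring
    have : (1 - 1 / a₁) * log X = log X - log X / a₁ := by ring
    linarith
  have hlarge : (2 : ℝ) ^ (X / log y) ≤ 2 ^ (a₁ * X / log X) := by
    refine rpow_le_rpow_of_exponent_le one_le_two ?_
    calc X / log y ≤ X / (log X / a₁) :=
          div_le_div_of_nonneg_left (by linarith) (by positivity) hlogy
      _ = a₁ * X / log X := by field_simp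
  have hsmall : (1 + X / log 2) ^ y ≤ 2 ^ (a₂ * X / log X) := by
    have hbase : 1 + X / log 2 ≤ X ^ 2 := by
      have : X / log 2 ≤ 2 * X := by rw [div_le_iff₀ (by positivity)]; nlinarith
      nlinarith
    calc (1 + X / log 2) ^ y ≤ (X ^ 2) ^ y := rpow_le_rpow (by positivity) hbase (by linarith)
      _ = 2 ^ (a₂ * X / log X) := by
        rw [rpow_def_of_pos (by positivity), rpow_def_of_pos two_pos, log_pow]
        congr 1
        simp only [y, c]
        field_simp
        ring
  calc (N.divisors.card : ℝ) ≤ 2 ^ (X / log y) * (1 + X / log 2) ^ y :=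
        card_divisors_le_two_rpow_mul_rpow hN0 hlogN (by linarith)
    _ ≤ 2 ^ (a₁ * X / log X) * 2 ^ (a₂ * X / log X) :=
        mul_le_mul hlarge hsmall (by positivity) (by positivity)
    _ = 2 ^ (a * X / log X) := by
        rw [← rpow_add two_pos]
        congr 1
        ring

theorem eventually_div_log_lt (c : ℝ) {κ ρ : ℝ} (hκ : 0 < κ) (hρ : 1 < ρ) :
    ∀ᶠ L in atTop, (c + κ * L * log L) / log (c + κ * L * log L) < ρ * κ * L := by
  filter_upwards [eventually_ge_atTop 3, eventually_ge_atTop |c|,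
    eventually_gt_atTop (|c| / (2 * (ρ - 1))), tendsto_log_atTop.eventually_ge_atTop (2 / κ)]
    with L hL hLc hLc' hlogL
  have hκlog : 2 ≤ κ * log L := by rwa [div_le_iff₀' hκ] at hlogL
  have hc : |c| < 2 * (ρ - 1) * L := by rwa [div_lt_iff₀' (by linarith)] at hLc'
  have hLY : L ≤ c + κ * L * log L := by nlinarith [neg_abs_le c]
  rw [div_lt_iff₀ (log_pos (by linarith))]
  have hgap : (ρ - 1) * L * 2 ≤ (ρ - 1) * L * (κ * log L) :=
    mul_le_mul_of_nonneg_left hκlog (mul_nonneg (by linarith) (by linarith))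
  calc c + κ * L * log L < ρ * κ * L * log L := by linarith [le_abs_self c]
    _ ≤ ρ * κ * L * log (c + κ * L * log L) := by gcongr

theorem eventually_card_divisors_lt {δ ε : ℝ} (hδ : 0 < δ) (hε : 0 < ε) :
    ∀ᶠ n : ℕ in atTop, ∀ N : ℕ,
      (N : ℝ) ≤ 4 * ((n : ℝ) ^ (δ * log (log n) / (4 * log 2 * (1 + ε)))) ^ 4 →
      (N.divisors.card : ℝ) < (n : ℝ) ^ δ := by
  set ρ := √(1 + ε)
  have hρ : 1 < ρ := by rw [lt_sqrt zero_le_one]; linarith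
  have hρ2 : ρ ^ 2 = 1 + ε := sq_sqrt (by linarith)
  set κ := δ / (log 2 * (1 + ε))
  have hκ : 0 < κ := by have := log_pos one_lt_two; positivity
  have hY : Tendsto (fun L => log 4 + κ * L * log L) atTop atTop :=
    tendsto_atTop_add_const_left _ _
      ((tendsto_id.const_mul_atTop hκ).atTop_mul_atTop₀ tendsto_log_atTop)
  have hlog : Tendsto (fun n : ℕ => log (n : ℝ)) atTop atTop :=
    tendsto_log_atTop.comp tendsto_natCast_atTop_atTop
  filter_upwards [hlog.eventually ((hY.eventually (eventually_card_divisors_le hρ)).and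
    (eventually_div_log_lt (log 4) hκ hρ)), eventually_gt_atTop 0] with n ⟨hτ, hdiv⟩ hn N hN
  have hn : (0 : ℝ) < n := mod_cast hn
  set L := log (n : ℝ)
  have hexp : 4 * ((n : ℝ) ^ (δ * log L / (4 * log 2 * (1 + ε)))) ^ 4 =
      exp (log 4 + κ * L * log L) := by
    rw [exp_add, exp_log (by norm_num), ← rpow_natCast, ← rpow_mul hn.le, rpow_def_of_pos hn]
    congr 2
    simp only [κ]
    field_simp
    ring
  calc (N.divisors.card : ℝ)
      ≤ 2 ^ (ρ * (log 4 + κ * L * log L) / log (log 4 + κ * L * log L)) :=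
        hτ N (hN.trans_eq hexp)
    _ < 2 ^ (ρ * (ρ * κ * L)) := by
        refine rpow_lt_rpow_of_exponent_lt one_lt_two ?_
        rw [mul_div_assoc]
        gcongr
    _ = (n : ℝ) ^ δ := by
        rw [rpow_def_of_pos two_pos, rpow_def_of_pos hn, ← mul_assoc ρ, ← mul_assoc ρ, ← sq, hρ2]
        congr 1
        simp only [κ, L]
        field_simp

theorem card_le_card_divisors_of_sq_sub_sq {ι : Type*} {s : Finset ι} {a b : ι → ℤ} {N : ℕ}
    (hN : 0 < N) (ha : ∀ i ∈ s, 0 ≤ a i) (hab : ∀ i ∈ s, a i ^ 2 - b i ^ 2 = N)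
    (hb : Set.InjOn b s) : s.card ≤ N.divisors.card := by
  have hfactor : ∀ i ∈ s, (a i + b i) * (a i - b i) = N := fun i hi => by
    rw [← hab i hi]; ring
  have hpos : ∀ i ∈ s, 0 < a i + b i := fun i hi => by
    have := hfactor i hi
    have := ha i hi
    nlinarith
  refine card_le_card_of_injOn (fun i => (a i + b i).toNat) (fun i hi => ?_)
    (fun i hi j hj hij => ?_)
  · rw [mem_coe, Nat.mem_divisors]
    refine ⟨?_, hN.ne'⟩
    rw [← Int.natCast_dvd_natCast, Int.toNat_of_nonneg (hpos i hi).le]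
    exact ⟨_, (hfactor i hi).symm⟩
  · have hsum : a i + b i = a j + b j := by
      have := hpos i hi
      have := hpos j hj
      simp only at hij
      omega
    have hdiff : a i - b i = a j - b j :=
      mul_left_cancel₀ (hpos i hi).ne' ((hfactor i hi).trans (hsum ▸ hfactor j hj).symm)
    exact hb hi hj (by linarith)

/-- The hypotheses are the law of cosines for a point at distance `A i` from position `z i` on a
line, at distances `A₀`, `A₁` from positions `0`, `m`, with its foot at position `c`. -/
theorem exists_le_sq_card_le_card_divisors {ι : Type*} {s : Finset ι} {A : ι → ℕ} {z : ι → ℤ}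
    (hz : Set.InjOn z s) {A₀ A₁ m : ℕ} (hm : 0 < m) {c : ℝ} (hc : c ^ 2 < A₀ ^ 2)
    (hA : ∀ i ∈ s, (A i : ℝ) ^ 2 = A₀ ^ 2 - 2 * z i * c + z i ^ 2)
    (hA₁ : (A₁ : ℝ) ^ 2 = A₀ ^ 2 - 2 * m * c + m ^ 2) :
    ∃ N : ℕ, N ≤ (2 * m * A₀) ^ 2 ∧ s.card ≤ N.divisors.card := by
  set u : ℤ := A₀ ^ 2 + m ^ 2 - A₁ ^ 2
  have hu : (u : ℝ) = 2 * m * c := by push_cast [u]; linarith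
  set N : ℤ := (2 * m * A₀) ^ 2 - u ^ 2
  have hNpos : 0 < N := by
    have hm' : (0 : ℝ) < m := mod_cast hm
    have : (N : ℝ) = 4 * m ^ 2 * (A₀ ^ 2 - c ^ 2) := by push_cast [N]; rw [hu]; ring
    have : (0 : ℝ) < N := by rw [this]; have := sub_pos.2 hc; positivity
    exact_mod_cast this
  have hNnat : ((N.toNat : ℕ) : ℤ) = N := Int.toNat_of_nonneg hNpos.le
  refine ⟨N.toNat, ?_, card_le_card_divisors_of_sq_sub_sq (a := fun i => 2 * m * A i)
    (b := fun i => 2 * m * z i - u) (by omega) (fun i _ => by positivity) (fun i hi => ?_)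
    (fun i hi j hj h => hz hi hj ?_)⟩
  · rw [Int.toNat_le]
    push_cast [N]
    nlinarith [sq_nonneg u]
  · rw [hNnat]
    have : ((2 * m * A i) ^ 2 - (2 * m * z i - u) ^ 2 : ℤ) = ((N : ℤ) : ℝ) := by
      push_cast [N]
      linear_combination (4 * (m : ℝ) ^ 2) * hA i hi + (4 * m * z i) * hu
    exact_mod_cast this
  · have hm0 : (2 * m : ℤ) ≠ 0 := by positivity
    exact mul_left_cancel₀ hm0 (by simpa using h)

section Geometry

variable {E : Type*} [NormedAddCommGroup E] [InnerProductSpace ℝ E]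

theorem norm_sub_smul_sq_of_norm_eq_one {w : E} (hw : ‖w‖ = 1) (x : E) (t : ℝ) :
    ‖x - t • w‖ ^ 2 = ‖x‖ ^ 2 - 2 * t * ⟪x, w⟫ + t ^ 2 := by
  rw [norm_sub_sq_real, real_inner_smul_right, norm_smul, hw, Real.norm_eq_abs, mul_one, sq_abs]
  ring

theorem Collinear.inner_smul_eq_sub {T : Set E} (hT : Collinear ℝ T) {p₀ p₁ p : E}
    (h₀ : p₀ ∈ T) (h₁ : p₁ ∈ T) (hp : p ∈ T) (hne : p₀ ≠ p₁) {w : E} (hw : ‖w‖ = 1)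
    (hw₁ : p₁ - p₀ ∈ ℝ ∙ w) : ⟪p - p₀, w⟫ • w = p - p₀ := by
  have hline : p - p₀ ∈ ℝ ∙ (p₁ - p₀) := by
    have := hT.mem_affineSpan_of_mem_of_ne h₀ h₁ hp hne
    rwa [← AffineSubspace.vsub_right_mem_direction_iff_mem (left_mem_affineSpan_pair ℝ p₀ p₁),
      direction_affineSpan, vectorSpan_pair_rev] at this
  rw [real_inner_comm, ← Submodule.starProjection_unit_singleton ℝ hw,
    Submodule.starProjection_eq_self_iff.2 ((Submodule.span_singleton_le_iff_mem _ _).2 hw₁ hline)]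

theorem Collinear.exists_intCast_smul_eq_sub {T : Set E} (hT : Collinear ℝ T)
    (hint : ∀ p ∈ T, ∀ q ∈ T, ∃ m : ℕ, dist p q = m) {p₀ p₁ : E} (h₀ : p₀ ∈ T) (h₁ : p₁ ∈ T)
    (hne : p₀ ≠ p₁) : ∃ w : E, ‖w‖ = 1 ∧ p₁ - p₀ = dist p₁ p₀ • w ∧
      ∀ p ∈ T, ∃ z : ℤ, p - p₀ = (z : ℝ) • w := by
  have hv : p₁ - p₀ ≠ 0 := sub_ne_zero.2 hne.symm
  set w := ‖p₁ - p₀‖⁻¹ • (p₁ - p₀)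
  have hw : ‖w‖ = 1 := norm_smul_inv_norm hv
  have hw₁ : p₁ - p₀ = dist p₁ p₀ • w := by
    rw [dist_eq_norm, smul_inv_smul₀ (norm_ne_zero_iff.2 hv)]
  refine ⟨w, hw, hw₁, fun p hp => ?_⟩
  have hline := hT.inner_smul_eq_sub h₀ h₁ hp hne hw
    (hw₁ ▸ Submodule.smul_mem _ _ (Submodule.mem_span_singleton_self w))
  obtain ⟨k, hk⟩ := hint p hp p₀ h₀
  have hk' : |⟪p - p₀, w⟫| = k := by
    rw [← Real.norm_eq_abs, ← mul_one ‖_‖, ← hw, ← norm_smul, hline, ← dist_eq_norm, hk]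
  rcases (abs_eq k.cast_nonneg).1 hk' with h | h
  exacts [⟨k, by rw [← hline, h]; rfl⟩, ⟨-k, by rw [← hline, h]; push_cast; rfl⟩]

theorem exists_le_four_mul_pow_four_card_le_card_divisors {S T : Finset E} (hTS : T ⊆ S)
    (hint : ∀ p ∈ S, ∀ q ∈ S, ∃ m : ℕ, dist p q = m) (hS : ¬ Collinear ℝ (S : Set E))
    (hT : Collinear ℝ (T : Set E)) (hcard : 2 ≤ T.card) {d : ℝ}
    (hd : ∀ p ∈ S, ∀ q ∈ S, dist p q ≤ d) :
    ∃ N : ℕ, (N : ℝ) ≤ 4 * d ^ 4 ∧ T.card ≤ N.divisors.card := by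
  obtain ⟨p₀, h₀, p₁, h₁, hne⟩ := one_lt_card.1 hcard
  obtain ⟨m, hm⟩ := hint p₁ (hTS h₁) p₀ (hTS h₀)
  obtain ⟨w, hw, hw₁, hz⟩ := hT.exists_intCast_smul_eq_sub
    (fun p hp q hq => hint p (hTS hp) q (hTS hq)) h₀ h₁ hne
  choose! z hz using hz
  have hw0 : w ≠ 0 := norm_ne_zero_iff.1 (hw.trans_ne one_ne_zero)
  have hzinj : Set.InjOn z T := fun p hp p' hp' h =>
    sub_left_injective ((hz p hp).trans (h ▸ (hz p' hp').symm))
  have hz₁ : z p₁ = m := by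
    have := (hz p₁ h₁).symm.trans (hm ▸ hw₁)
    exact_mod_cast smul_left_injective ℝ hw0 this
  obtain ⟨q, hqS, hq⟩ : ∃ q ∈ S, ∀ r : ℝ, q - p₀ ≠ r • w := by
    by_contra! h
    refine hS ((collinear_iff_of_mem (hTS h₀)).2 ⟨w, fun p hp => ?_⟩)
    obtain ⟨r, hr⟩ := h p hp
    exact ⟨r, by rw [vadd_eq_add, ← hr, sub_add_cancel]⟩
  choose! A hA using fun p (hp : p ∈ T) => hint q hqS p (hTS hp)
  have hdist : ∀ p ∈ T, (A p : ℝ) ^ 2 = A p₀ ^ 2 - 2 * z p * ⟪q - p₀, w⟫ + z p ^ 2 :=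
    fun p hp => by
      rw [← hA p hp, ← hA p₀ h₀, dist_eq_norm, dist_eq_norm, ← sub_sub_sub_cancel_right q p p₀,
        hz p hp, norm_sub_smul_sq_of_norm_eq_one hw]
  have hc : ⟪q - p₀, w⟫ ^ 2 < A p₀ ^ 2 := by
    have := norm_sub_smul_sq_of_norm_eq_one hw (q - p₀) ⟪q - p₀, w⟫
    have := norm_pos_iff.2 (sub_ne_zero.2 (hq ⟪q - p₀, w⟫))
    rw [← hA p₀ h₀, dist_eq_norm]
    nlinarith
  obtain ⟨N, hN, hcardN⟩ := exists_le_sq_card_le_card_divisors hzinj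
    (Nat.cast_pos.1 (hm ▸ dist_pos.2 hne.symm)) hc hdist (hz₁ ▸ hdist p₁ h₁)
  refine ⟨N, ?_, hcardN⟩
  have hd0 : 0 ≤ d := dist_nonneg.trans (hd q hqS q hqS)
  calc (N : ℝ) ≤ (2 * m * A p₀) ^ 2 := mod_cast hN
    _ ≤ (2 * d * d) ^ 2 := by
      gcongr
      · exact hm ▸ hd p₁ (hTS h₁) p₀ (hTS h₀)
      · exact hA p₀ h₀ ▸ hd q hqS p₀ (hTS h₀)
    _ = 4 * d ^ 4 := by ring

end Geometry

/-- For `δ > 0` and `ε > 0` there is `n₀` such that for all `n ≥ n₀`, every plane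
integral point set of `n` points containing at least `n^δ` collinear points has
diameter at least `n^(δ·log log n / (4·log 2·(1+ε)))`. -/
theorem lower_bound_diameter_many_collinear (δ ε : ℝ) (hδ : 0 < δ) (hε : 0 < ε) :
    ∃ n₀ : ℕ, ∀ n : ℕ, n₀ ≤ n → ∀ S : Finset (EuclideanSpace ℝ (Fin 2)),
      S.card = n →
      (∀ p ∈ S, ∀ q ∈ S, ∃ m : ℕ, dist p q = m) →
      ¬ Collinear ℝ (S : Set (EuclideanSpace ℝ (Fin 2))) →
      (∃ T : Finset (EuclideanSpace ℝ (Fin 2)), T ⊆ S ∧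
        Collinear ℝ (T : Set (EuclideanSpace ℝ (Fin 2))) ∧ (n : ℝ) ^ δ ≤ (T.card : ℝ)) →
      ∃ p ∈ S, ∃ q ∈ S,
        (n : ℝ) ^ (δ * Real.log (Real.log n) / (4 * Real.log 2 * (1 + ε))) ≤ dist p q := by
  have htwo : ∀ᶠ n : ℕ in atTop, (2 : ℝ) ≤ (n : ℝ) ^ δ :=
    ((tendsto_rpow_atTop hδ).comp tendsto_natCast_atTop_atTop).eventually_ge_atTop 2
  obtain ⟨n₀, hn₀⟩ := eventually_atTop.1 ((eventually_card_divisors_lt hδ hε).and htwo)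
  refine ⟨n₀, fun n hn S _ hint hS ⟨T, hTS, hT, hTcard⟩ => ?_⟩
  obtain ⟨hτ, h2⟩ := hn₀ n hn
  by_contra! hsmall
  obtain ⟨N, hN, hTN⟩ := exists_le_four_mul_pow_four_card_le_card_divisors hTS hint hS hT
    (mod_cast h2.trans hTcard) fun p hp q hq => (hsmall p hp q hq).le
  exact (hτ N hN).not_ge (hTcard.trans (mod_cast hTN))
end

section
/- Every plane integral point set of n points with at most n/2 points on any line contains at least n/8 pairwise non-congruent non-degenerate integral triangles, all with the same diameter-pair side and equal characteristic; more precisely, for any two points A, B of the set, among the triangles ABC over points C of the set not on line AB, at most 4 can be congruent to each other, so there are at least n/8 non-congruent triangles sharing the side AB. -/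
/-!
A third point `C` of a triangle with given side `AB` and given multiset of the other two side
lengths lies on one of two pairs of circles around `A` and `B`, so in the plane there are at most
four such `C`. The points not on the line `AB` are at least `n/2` in number, since that line
holds at most `n/2` points; grouping them by the shape of `ABC` leaves at least `n/8` classes,
and one representative per class gives the pairwise non-congruent triangles.
-/

open EuclideanGeometry Module Finset

theorem Multiset.pair_eq_pair_iff {α : Type*} {a b c d : α} :
    ({a, b} : Multiset α) = {c, d} ↔ a = c ∧ b = d ∨ a = d ∧ b = c := by
  refine ⟨fun h => ?_, ?_⟩
  · simp only [Multiset.insert_eq_cons] at h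
    rcases Multiset.cons_eq_cons.1 h with ⟨rfl, hbd⟩ | ⟨-, cs, hb, hd⟩
    · exact .inl ⟨rfl, Multiset.singleton_inj.1 hbd⟩
    · obtain ⟨rfl, rfl⟩ := (Multiset.singleton_eq_cons_iff _).1 hb
      obtain ⟨rfl, -⟩ := (Multiset.singleton_eq_cons_iff _).1 hd.symm
      exact .inr ⟨rfl, rfl⟩
  · rintro (⟨rfl, rfl⟩ | ⟨rfl, rfl⟩)
    exacts [rfl, Multiset.pair_comm _ _]

theorem Finset.exists_subset_injOn_card_le_mul_card {α β : Type*} [DecidableEq β]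
    (s : Finset α) (f : α → β) (k : ℕ) (hk : ∀ a ∈ s, #{a' ∈ s | f a' = f a} ≤ k) :
    ∃ t ⊆ s, Set.InjOn f t ∧ #s ≤ k * #t := by
  have hs : #s ≤ k * #(s.image f) := card_le_mul_card_image s k fun b hb => by
    obtain ⟨a, ha, rfl⟩ := mem_image.1 hb
    exact hk a ha
  obtain ⟨t, hts, hinj, himage⟩ :=
    exists_subset_injOn_image_eq_of_surjOn (s : Set α) (s.image f) fun b hb => by simpa using hb
  refine ⟨t, mod_cast hts, hinj, ?_⟩
  rwa [← himage, card_image_of_injOn hinj] at hs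

section Collinear

variable {k V P : Type*} [DivisionRing k] [AddCommGroup V] [Module k V] [AddTorsor V P]

theorem collinear_of_forall_collinear_triple {s : Set P} {A B : P} (hAB : A ≠ B)
    (hs : ∀ C ∈ s, Collinear k ({A, B, C} : Set P)) : Collinear k s := by
  have hline : Collinear k (line[k, A, B] : Set P) := by
    rw [Collinear, ← AffineSubspace.direction, direction_affineSpan]
    exact collinear_pair k A B
  exact hline.subset fun C hC => (hs C hC).mem_affineSpan_of_mem_of_ne (by simp) (by simp)
    (by simp) hAB

end Collinear

section Plane

variable {V P : Type*} [NormedAddCommGroup V] [InnerProductSpace ℝ V] [MetricSpace P]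
  [NormedAddTorsor V P] [FiniteDimensional ℝ V]

theorem encard_setOf_dist_eq_dist_eq_le_two (hd : finrank ℝ V = 2) {A B : P} (hAB : A ≠ B)
    (r s : ℝ) : {C : P | dist A C = r ∧ dist B C = s}.encard ≤ 2 := by
  rcases Set.subsingleton_or_nontrivial {C : P | dist A C = r ∧ dist B C = s} with
    h | ⟨C₁, ⟨hA₁, hB₁⟩, C₂, ⟨hA₂, hB₂⟩, hne⟩
  · exact (Set.encard_le_one_iff_subsingleton.2 h).trans (by norm_num)
  · calc _ ≤ ({C₁, C₂} : Set P).encard := Set.encard_le_encard <| by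
          rintro C ⟨hA, hB⟩
          simp only [dist_comm A, dist_comm B] at hA hB hA₁ hB₁ hA₂ hB₂
          exact eq_of_dist_eq_of_dist_eq_of_finrank_eq_two hd hAB hne hA₁ hA₂ hA hB₁ hB₂ hB
      _ = 2 := Set.encard_pair hne

theorem encard_setOf_dist_pair_eq_le_four (hd : finrank ℝ V = 2) {A B : P} (hAB : A ≠ B)
    (r s : ℝ) : {C : P | ({dist A C, dist B C} : Multiset ℝ) = {r, s}}.encard ≤ 4 :=
  calc _ ≤ ({C : P | dist A C = r ∧ dist B C = s} ∪
        {C : P | dist A C = s ∧ dist B C = r}).encard :=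
        Set.encard_le_encard fun C hC => Multiset.pair_eq_pair_iff.1 hC
    _ ≤ 2 + 2 := (Set.encard_union_le _ _).trans <| add_le_add
        (encard_setOf_dist_eq_dist_eq_le_two hd hAB r s)
        (encard_setOf_dist_eq_dist_eq_le_two hd hAB s r)
    _ = 4 := by norm_num

end Plane

theorem many_noncongruent_triangles_general (n : ℕ) (S : Finset (EuclideanSpace ℝ (Fin 2)))
    (hcard : S.card = n)
    (hline : ∀ T : Finset (EuclideanSpace ℝ (Fin 2)), T ⊆ S →
      Collinear ℝ (T : Set (EuclideanSpace ℝ (Fin 2))) → 2 * T.card ≤ n) :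
    ∀ A ∈ S, ∀ B ∈ S, A ≠ B →
      (∀ C ∈ S, ¬ Collinear ℝ ({A, B, C} : Set (EuclideanSpace ℝ (Fin 2))) →
        ({C' : EuclideanSpace ℝ (Fin 2) | C' ∈ S ∧
          ¬ Collinear ℝ ({A, B, C'} : Set (EuclideanSpace ℝ (Fin 2))) ∧
          ({dist A C', dist B C'} : Multiset ℝ) = {dist A C, dist B C}}).ncard ≤ 4) ∧
      (∃ V : Finset (EuclideanSpace ℝ (Fin 2)), V ⊆ S ∧ n ≤ 8 * V.card ∧
        (∀ C ∈ V, ¬ Collinear ℝ ({A, B, C} : Set (EuclideanSpace ℝ (Fin 2)))) ∧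
        (∀ C ∈ V, ∀ C' ∈ V, C ≠ C' →
          ({dist A C, dist B C} : Multiset ℝ) ≠ {dist A C', dist B C'})) := by
  classical
  intro A _ B _ hAB
  have hfour (C : EuclideanSpace ℝ (Fin 2)) :
      {C' | ({dist A C', dist B C'} : Multiset ℝ) = {dist A C, dist B C}}.encard ≤ 4 :=
    encard_setOf_dist_pair_eq_le_four finrank_euclideanSpace_fin hAB _ _
  refine ⟨fun C _ _ => (Set.encard_le_coe_iff_finite_ncard_le.1
    ((Set.encard_le_encard fun C' hC' => hC'.2.2).trans (hfour C))).2, ?_⟩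
  set O := S.filter fun C => ¬ Collinear ℝ ({A, B, C} : Set (EuclideanSpace ℝ (Fin 2)))
  have hO : n ≤ 2 * #O := by
    have hL := hline _ (filter_subset _ S) <| collinear_of_forall_collinear_triple hAB
      fun C hC => (mem_filter.1 hC).2
    have : #{C ∈ S | Collinear ℝ ({A, B, C} : Set (EuclideanSpace ℝ (Fin 2)))} + #O = #S :=
      card_filter_add_card_filter_not _
    omega
  obtain ⟨V, hVO, hinj, hOV⟩ := O.exists_subset_injOn_card_le_mul_card
    (fun C => ({dist A C, dist B C} : Multiset ℝ)) 4 fun C _ => by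
      exact_mod_cast (Set.encard_le_encard fun C' hC' => (mem_filter.1 hC').2).trans (hfour C)
  refine ⟨V, hVO.trans (filter_subset _ S), by omega, fun C hC => (mem_filter.1 (hVO hC)).2,
    fun C hC C' hC' hne h => hne (hinj hC hC' h)⟩

/-- Every plane integral point set of `n` points with at most `n/2` points on any line
contains, for each pair of distinct points `A, B`, at least `n/8` pairwise non-congruent
non-degenerate integral triangles sharing the side `AB`: at most `4` points `C` yield
triangles `ABC` congruent to a given one, and there is a subset `V` of at least `n/8`
points giving pairwise non-congruent triangles over `AB`. -/
theorem many_noncongruent_triangles (n : ℕ) (S : Finset (EuclideanSpace ℝ (Fin 2)))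
    (hcard : S.card = n)
    (hint : ∀ p ∈ S, ∀ q ∈ S, ∃ m : ℕ, dist p q = m)
    (hncol : ¬ Collinear ℝ (S : Set (EuclideanSpace ℝ (Fin 2))))
    (hline : ∀ T : Finset (EuclideanSpace ℝ (Fin 2)), T ⊆ S →
      Collinear ℝ (T : Set (EuclideanSpace ℝ (Fin 2))) → 2 * T.card ≤ n) :
    ∀ A ∈ S, ∀ B ∈ S, A ≠ B →
      (∀ C ∈ S, ¬ Collinear ℝ ({A, B, C} : Set (EuclideanSpace ℝ (Fin 2))) →
        ({C' : EuclideanSpace ℝ (Fin 2) | C' ∈ S ∧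
          ¬ Collinear ℝ ({A, B, C'} : Set (EuclideanSpace ℝ (Fin 2))) ∧
          ({dist A C', dist B C'} : Multiset ℝ) = {dist A C, dist B C}}).ncard ≤ 4) ∧
      (∃ V : Finset (EuclideanSpace ℝ (Fin 2)), V ⊆ S ∧ n ≤ 8 * V.card ∧
        (∀ C ∈ V, ¬ Collinear ℝ ({A, B, C} : Set (EuclideanSpace ℝ (Fin 2)))) ∧
        (∀ C ∈ V, ∀ C' ∈ V, C ≠ C' →
          ({dist A C, dist B C} : Multiset ℝ) ≠ {dist A C', dist B C'})) :=
  many_noncongruent_triangles_general n S hcard hline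
end

section
/- Among all n-point sets in the plane with n−1 points collinear (the maximum allowed collinearity), the number of non-degenerate triangles formed by triples of points equals C(n−1, 2) = (n−1)(n−2)/2; among point sets with no three collinear it equals C(n,3) = n(n−1)(n−2)/6, and these are respectively the minimum and maximum over all plane point sets of n points not all collinear. -/
/-!
The bound `C(n, 3)` and the case without collinear triples are immediate. If `S = T ∪ {p}` with
`T` collinear, the non-collinear triples are exactly `{p} ∪ A` for the pairs `A ⊆ T`.

For the lower bound fix `p ∈ S` and send each pair `A ⊆ S \ {p}` to a non-collinear triple
containing it: `A ∪ {p}` if that is not collinear, and otherwise `A ∪ {c}` for some `c ∈ S` off the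
line through `A`. No triple receives two pairs: a triple containing `p` determines its pair, and
two pairs collinear with `p` inside a triple avoiding `p` share a point `a`, which puts the whole
triple on the line `pa`.
-/

open Finset

section

variable {k V P : Type*} [DivisionRing k] [AddCommGroup V] [Module k V] [AddTorsor V P]

theorem collinear_of_subset_affineSpan_pair {s : Set P} {a b : P} (h : s ⊆ line[k, a, b]) :
    Collinear k s :=
  (Submodule.rank_mono ((vectorSpan_mono k h).trans_eq (direction_affineSpan k _))).trans
    (collinear_pair k a b)

theorem collinear_of_card_le_two {S : Finset P} (h : #S ≤ 2) : Collinear k (S : Set P) := by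
  classical
  interval_cases hc : #S
  · simp [card_eq_zero.mp hc, collinear_empty]
  · obtain ⟨a, rfl⟩ := card_eq_one.mp hc
    simpa using collinear_singleton k a
  · obtain ⟨a, b, -, rfl⟩ := card_eq_two.mp hc
    simpa using collinear_pair k a b

theorem three_le_card_of_not_collinear {S : Finset P} (h : ¬Collinear k (S : Set P)) :
    3 ≤ #S := by
  by_contra! hlt
  exact h (collinear_of_card_le_two (by omega))

theorem exists_not_collinear_insert_pair {s : Set P} (hs : ¬Collinear k s) {a b : P}
    (hab : a ≠ b) : ∃ c ∈ s, ¬Collinear k ({c, a, b} : Set P) := by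
  by_contra! h
  exact hs <| collinear_of_subset_affineSpan_pair fun c hc =>
    (h c hc).mem_affineSpan_of_mem_of_ne (by simp) (by simp) (by simp) hab

theorem collinear_union_of_collinear_insert {s t : Set P} {p a : P} (hpa : p ≠ a)
    (has : a ∈ s) (hat : a ∈ t) (hs : Collinear k (insert p s)) (ht : Collinear k (insert p t)) :
    Collinear k (s ∪ t) := by
  refine collinear_of_subset_affineSpan_pair (Set.union_subset ?_ ?_) (a := p) (b := a)
  · exact fun x hx => hs.mem_affineSpan_of_mem_of_ne (Set.mem_insert _ _)
      (Set.mem_insert_of_mem _ has) (Set.mem_insert_of_mem _ hx) hpa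
  · exact fun x hx => ht.mem_affineSpan_of_mem_of_ne (Set.mem_insert _ _)
      (Set.mem_insert_of_mem _ hat) (Set.mem_insert_of_mem _ hx) hpa

variable (k) in
open Classical in
noncomputable def nonCollinearTriples (S : Finset P) : Finset (Finset P) :=
  {T ∈ S.powersetCard 3 | ¬Collinear k (T : Set P)}

theorem mem_nonCollinearTriples {S T : Finset P} :
    T ∈ nonCollinearTriples k S ↔ (T ⊆ S ∧ #T = 3) ∧ ¬Collinear k (T : Set P) := by
  simp [nonCollinearTriples, mem_powersetCard]

theorem card_nonCollinearTriples_le (S : Finset P) :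
    #(nonCollinearTriples k S) ≤ (#S).choose 3 := by
  classical
  exact (card_filter_le _ _).trans_eq (card_powersetCard 3 S)

theorem card_nonCollinearTriples_of_forall_not_collinear {S : Finset P}
    (h : ∀ T ⊆ S, #T = 3 → ¬Collinear k (T : Set P)) :
    #(nonCollinearTriples k S) = (#S).choose 3 := by
  classical
  rw [nonCollinearTriples, filter_true_of_mem, card_powersetCard]
  exact fun T hT => h T (mem_powersetCard.1 hT).1 (mem_powersetCard.1 hT).2

variable [DecidableEq P]

theorem insert_mem_nonCollinearTriples {S A : Finset P} {c : P} (hc : c ∈ S)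
    (hA : A ⊆ S) (hA2 : #A = 2) (h : ¬Collinear k (insert c A : Set P)) :
    insert c A ∈ nonCollinearTriples k S := by
  have hcA : c ∉ A := fun hcA => h <| by
    rw [Set.insert_eq_of_mem (mem_coe.2 hcA)]
    exact collinear_of_card_le_two hA2.le
  rw [mem_nonCollinearTriples, coe_insert, card_insert_of_notMem hcA, hA2]
  exact ⟨⟨insert_subset hc hA, rfl⟩, h⟩

theorem nonCollinearTriples_insert_of_collinear {T : Finset P} {p : P}
    (hT : Collinear k (T : Set P)) (hpT : ¬Collinear k (insert p T : Set P)) :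
    nonCollinearTriples k (insert p T) = (T.powersetCard 2).image (insert p) := by
  ext U
  rw [mem_image]
  constructor
  · rw [mem_nonCollinearTriples]
    rintro ⟨⟨hU, hU3⟩, hUcol⟩
    have hpU : p ∈ U := by
      by_contra hpU
      exact hUcol (hT.subset (coe_subset.2 ((subset_insert_iff_of_notMem hpU).1 hU)))
    refine ⟨U.erase p, mem_powersetCard.2 ⟨subset_insert_iff.1 hU, ?_⟩, insert_erase hpU⟩
    rw [card_erase_of_mem hpU, hU3]
  · rintro ⟨A, hA, rfl⟩
    obtain ⟨hAT, hA2⟩ := mem_powersetCard.1 hA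
    obtain ⟨a, b, hab, rfl⟩ := card_eq_two.mp hA2
    have hpab : ¬Collinear k ({p, a, b} : Set P) := by
      rwa [← hT.collinear_insert_iff_of_ne (hAT (by simp)) (hAT (by simp)) hab]
    exact insert_mem_nonCollinearTriples (mem_insert_self p T)
      (hAT.trans (subset_insert p T)) hA2 (by simpa using hpab)

theorem card_nonCollinearTriples_insert_of_collinear {T : Finset P} {p : P}
    (hT : Collinear k (T : Set P)) (hpT : ¬Collinear k (insert p T : Set P)) :
    #(nonCollinearTriples k (insert p T)) = (#T).choose 2 := by
  have hp : p ∉ T := fun hp => hpT (by rwa [Set.insert_eq_of_mem (mem_coe.2 hp)])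
  rw [nonCollinearTriples_insert_of_collinear hT hpT, card_image_of_injOn, card_powersetCard]
  exact insert_erase_invOn.2.injOn.mono fun A hA => notMem_mono (mem_powersetCard.1 hA).1 hp

theorem choose_two_le_card_nonCollinearTriples {S : Finset P} (hS : ¬Collinear k (S : Set P))
    {p : P} (hp : p ∈ S) : (#S - 1).choose 2 ≤ #(nonCollinearTriples k S) := by
  rw [← card_erase_of_mem hp, ← card_powersetCard]
  refine card_le_card_of_forall_subsingleton
    (fun (A T : Finset P) => A ⊆ T ∧ (p ∈ T ∨ Collinear k (insert p A : Set P))) (fun A hA => ?_)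
    (fun T hT => ?_)
  · obtain ⟨hAS, hA2⟩ := mem_powersetCard.1 hA
    have hA : A ⊆ S := hAS.trans (erase_subset p S)
    by_cases hpA : Collinear k (insert p A : Set P)
    · obtain ⟨a, b, hab, rfl⟩ := card_eq_two.mp hA2
      obtain ⟨c, hc, hcab⟩ := exists_not_collinear_insert_pair hS hab
      exact ⟨insert c {a, b}, insert_mem_nonCollinearTriples hc hA hA2 (by simpa using hcab),
        subset_insert _ _, Or.inr hpA⟩
    · exact ⟨insert p A, insert_mem_nonCollinearTriples hp hA hA2 hpA, subset_insert _ _,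
        Or.inl (mem_insert_self _ _)⟩
  · obtain ⟨⟨-, hT3⟩, hTcol⟩ := mem_nonCollinearTriples.1 hT
    rintro A₁ ⟨hA₁, hA₁T, h₁⟩ A₂ ⟨hA₂, hA₂T, h₂⟩
    rw [mem_powersetCard, subset_erase] at hA₁ hA₂
    by_cases hpT : p ∈ T
    · have erase_eq : ∀ A ⊆ T, p ∉ A → #A = 2 → A = T.erase p := fun A hAT hpA hA2 =>
        eq_of_subset_of_card_le (subset_erase.2 ⟨hAT, hpA⟩)
          (by rw [card_erase_of_mem hpT, hT3, hA2])
      rw [erase_eq A₁ hA₁T hA₁.1.2 hA₁.2, erase_eq A₂ hA₂T hA₂.1.2 hA₂.2]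
    by_contra hne
    obtain ⟨a, ha⟩ := inter_nonempty_of_card_lt_card_add_card hA₁T hA₂T (by omega)
    rw [mem_inter] at ha
    have hunion : A₁ ∪ A₂ = T := by
      have : #A₁ < #(A₁ ∪ A₂) := card_lt_card <|
        left_lt_sup.2 fun h => hne (eq_of_subset_of_card_le h (by omega)).symm
      exact eq_of_subset_of_card_le (union_subset hA₁T hA₂T) (by omega)
    apply hTcol
    rw [← hunion, coe_union]
    exact collinear_union_of_collinear_insert (by rintro rfl; exact hA₁.1.2 ha.1) ha.1 ha.2
      (h₁.resolve_left hpT) (h₂.resolve_left hpT)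

omit [DecidableEq P] in
theorem card_filter_image_coe_not_collinear [DecidableEq (Set P)]
    [DecidablePred fun T : Set P => ¬Collinear k T] (S : Finset P) :
    #{T ∈ (S.powersetCard 3).image ((↑) : Finset P → Set P) | ¬Collinear k T} =
      #(nonCollinearTriples k S) := by
  rw [filter_image, card_image_of_injective _ coe_injective, nonCollinearTriples]
  convert rfl

end

open Classical in
/-- For a set `S` of `n` points in the plane, not all collinear: if `n−1` of the points
are collinear then the number of non-collinear triples equals `C(n−1,2)`; if no three
points are collinear it equals `C(n,3)`; and in general the count lies between these
two values. -/
theorem count_nondegenerate_triangles (n : ℕ) (S : Finset (EuclideanSpace ℝ (Fin 2)))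
    (hcard : S.card = n)
    (hncol : ¬ Collinear ℝ (S : Set (EuclideanSpace ℝ (Fin 2)))) :
    ((∃ T : Finset (EuclideanSpace ℝ (Fin 2)), T ⊆ S ∧ T.card = n - 1 ∧
        Collinear ℝ (T : Set (EuclideanSpace ℝ (Fin 2)))) →
      ((S.powersetCard 3).filter
        (fun T => ¬ Collinear ℝ (T : Set (EuclideanSpace ℝ (Fin 2))))).card
        = Nat.choose (n - 1) 2) ∧
    ((∀ T : Finset (EuclideanSpace ℝ (Fin 2)), T ⊆ S → T.card = 3 →
        ¬ Collinear ℝ (T : Set (EuclideanSpace ℝ (Fin 2)))) →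
      ((S.powersetCard 3).filter
        (fun T => ¬ Collinear ℝ (T : Set (EuclideanSpace ℝ (Fin 2))))).card
        = Nat.choose n 3) ∧
    (Nat.choose (n - 1) 2 ≤
      ((S.powersetCard 3).filter
        (fun T => ¬ Collinear ℝ (T : Set (EuclideanSpace ℝ (Fin 2))))).card ∧
      ((S.powersetCard 3).filter
        (fun T => ¬ Collinear ℝ (T : Set (EuclideanSpace ℝ (Fin 2))))).card
        ≤ Nat.choose n 3) := by
  classical
  -- The ascription `(T : Set _)` makes the statement filter the image of `S.powersetCard 3`
  -- in `Finset (Set _)`, reached through the `Finset` monad.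
  simp only [bind_pure_comp, fmap_def, card_filter_image_coe_not_collinear]
  subst hcard
  have h3 := three_le_card_of_not_collinear hncol
  refine ⟨fun ⟨T, hTS, hT, hTcol⟩ => ?_, card_nonCollinearTriples_of_forall_not_collinear,
    ?_, card_nonCollinearTriples_le S⟩
  · obtain ⟨p, -, rfl⟩ := exists_eq_insert_iff.2 ⟨hTS, by omega⟩
    rw [← hT]
    exact card_nonCollinearTriples_insert_of_collinear hTcol (by rwa [coe_insert] at hncol)
  · obtain ⟨p, hp⟩ := card_pos.1 (by omega : 0 < #S)
    exact choose_two_le_card_nonCollinearTriples hncol hp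
end
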